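/- arXiv:1109.6085 — 9 statements merged into one kernel-verified Lean document; each statement's English description precedes it below -/
import Mathlib

section
/- Let γ : I → ℝ² be a rectifiable curve parametrized by arclength whose coordinate functions x(s) and y(s) are both monotone. Then the arclength measure μ_γ satisfies μ_γ(A) ≤ |A_x| + |A_y| for every Borel set A ⊂ ℝ², i.e., γ is well-projected with constants k_x = k_y = 1. -/
open MeasureTheory Set Pointwise

lemma monotoneOn_Icc_of_Ioo {g : ℝ → ℝ} (hg : Continuous g) {a b : ℝ}
    (h : MonotoneOn g (Set.Ioo a b)) : MonotoneOn g (Set.Icc a b) := by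
  rintro p ⟨hap, hpb⟩ q ⟨haq, hqb⟩ hpq
  rcases eq_or_lt_of_le hpq with rfl | hlt
  · exact le_rfl
  have h1 : ∀ y ∈ Set.Ioo p q, g p ≤ g y := by
    intro y hy
    haveI : (nhdsWithin p (Set.Ioo p y)).NeBot := by
      rw [nhdsWithin_Ioo_eq_nhdsGT hy.1]; infer_instance
    refine le_of_tendsto (x := nhdsWithin p (Set.Ioo p y))
      ((hg.tendsto p).mono_left nhdsWithin_le_nhds) ?_
    filter_upwards [self_mem_nhdsWithin] with z hz
    exact h ⟨lt_of_le_of_lt hap hz.1, lt_of_lt_of_le (hz.2.trans hy.2) hqb⟩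
      ⟨lt_of_le_of_lt hap hy.1, lt_of_lt_of_le hy.2 hqb⟩ hz.2.le
  haveI : (nhdsWithin q (Set.Ioo p q)).NeBot := by
    rw [nhdsWithin_Ioo_eq_nhdsLT hlt]; infer_instance
  refine ge_of_tendsto (x := nhdsWithin q (Set.Ioo p q))
    ((hg.tendsto q).mono_left nhdsWithin_le_nhds) ?_
  filter_upwards [self_mem_nhdsWithin] with z hz using h1 z hz

lemma evar_prod_le (f : ℝ → ℝ × ℝ) (u v : ℝ → ℝ)
    (h : ∀ p q : ℝ, edist (f p) (f q) ≤ edist (u p) (u q) + edist (v p) (v q)) (E : Set ℝ) :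
    eVariationOn f E ≤ eVariationOn u E + eVariationOn v E := by
  apply iSup_le
  rintro ⟨n, ⟨w, hw, ws⟩⟩
  calc (∑ i ∈ Finset.range n, edist (f (w (i+1))) (f (w i)))
      ≤ ∑ i ∈ Finset.range n,
        (edist (u (w (i+1))) (u (w i)) + edist (v (w (i+1))) (v (w i))) :=
        Finset.sum_le_sum fun i _ => h _ _
    _ = (∑ i ∈ Finset.range n, edist (u (w (i+1))) (u (w i)))
        + (∑ i ∈ Finset.range n, edist (v (w (i+1))) (v (w i))) := Finset.sum_add_distrib
    _ ≤ _ := add_le_add (eVariationOn.sum_le (f := u) (n := n) hw ws) (eVariationOn.sum_le (f := v) (n := n) hw ws)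

lemma clamp_measure {a b : ℝ} (hab : a ≤ b) (fc : StieltjesFunction ℝ)
    (hfc : ∀ x, fc x = max a (min x b)) :
    fc.measure = volume.restrict (Set.Icc a b) := by
  refine Measure.ext_of_Ioc' _ _ (fun p q _ => by
    rw [fc.measure_Ioc]; exact ENNReal.ofReal_ne_top) (fun p q hpq => ?_)
  rw [fc.measure_Ioc, Measure.restrict_apply measurableSet_Ioc, hfc, hfc]
  have hsub1 : Set.Ioc (max p a) (min q b) ⊆ Set.Ioc p q ∩ Set.Icc a b := by
    rintro x ⟨h1, h2⟩
    exact ⟨⟨lt_of_le_of_lt (le_max_left _ _) h1, h2.trans (min_le_left _ _)⟩,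
      (le_max_right _ _).trans h1.le, h2.trans (min_le_right _ _)⟩
  have hsub2 : Set.Ioc p q ∩ Set.Icc a b ⊆ insert a (Set.Ioc (max p a) (min q b)) := by
    rintro x ⟨⟨h1, h2⟩, h3, h4⟩
    rcases eq_or_lt_of_le h3 with rfl | h3
    · exact Or.inl rfl
    · exact Or.inr ⟨max_lt h1 h3, le_min h2 h4⟩
  have hvol : volume (Set.Ioc p q ∩ Set.Icc a b) = ENNReal.ofReal (min q b - max p a) := by
    refine le_antisymm ?_ ?_
    · refine (measure_mono hsub2).trans ?_
      rw [Set.insert_eq]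
      refine (measure_union_le _ _).trans ?_
      simp [Real.volume_Ioc]
    · rw [← Real.volume_Ioc]; exact measure_mono hsub1
  rw [hvol]
  by_cases hc : max p a < min q b
  · have h2 : p < b := lt_of_le_of_lt (le_max_left p a) (hc.trans_le (min_le_right q b))
    have h1 : a ≤ min q b := (le_max_right p a).trans hc.le
    rw [max_eq_right h1, min_eq_left h2.le]
    congr 1
    rw [max_comm]
  · push_neg at hc
    have hL : max a (min q b) ≤ max a (min p b) := by
      rcases le_total p a with hpa | hpa
      · rw [max_eq_right hpa] at hc
        rw [max_eq_left hc]
        exact le_max_left _ _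
      · rw [max_eq_left hpa] at hc
        have hb : b ≤ p := by
          by_contra hb'
          push_neg at hb'
          have := lt_min hpq hb'
          linarith
        rw [min_eq_right hb, min_eq_right (hb.trans hpq.le)]
    rw [ENNReal.ofReal_eq_zero.2 (by linarith), ENNReal.ofReal_eq_zero.2 (sub_nonpos.2 hc)]

lemma stieltjes_le_image {a b : ℝ} (hab : a < b) (gu : ℝ → ℝ) (hc : Continuous gu)
    (hm : MonotoneOn gu (Set.Icc a b)) (S : Set ℝ) (hS : MeasurableSet S)
    (fu : StieltjesFunction ℝ) (hfu : ∀ x, fu x = gu (max a (min x b))) :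
    fu.measure S ≤ volume (gu '' S) := by
  set Ay : ℝ → Set ℝ := fun y => (Set.Icc a b ∩ {x | y ≤ gu x}) ∪ {b} with hAy
  have hclosed : ∀ y, IsClosed (Ay y) := fun y =>
    (isClosed_Icc.inter (isClosed_le continuous_const hc)).union isClosed_singleton
  have hne : ∀ y, (Ay y).Nonempty := fun y => ⟨b, Or.inr rfl⟩
  have hbdd : ∀ y, BddBelow (Ay y) := by
    intro y
    refine ⟨a, ?_⟩
    rintro x (⟨⟨h1, _⟩, _⟩ | rfl)
    · exact h1
    · exact hab.le
  set gi : ℝ → ℝ := fun y => sInf (Ay y) with hgi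
  have hmem : ∀ y, gi y ∈ Ay y := fun y => (hclosed y).csInf_mem (hne y) (hbdd y)
  have hgiIcc : ∀ y, gi y ∈ Set.Icc a b := by
    intro y
    rcases hmem y with ⟨h1, _⟩ | h
    · exact h1
    · rw [Set.mem_singleton_iff] at h; rw [h]; exact ⟨hab.le, le_rfl⟩
  have hgim : Monotone gi := by
    intro y1 y2 h
    refine csInf_le_csInf (hbdd y1) (hne y2) ?_
    rintro x (⟨h1, h2⟩ | rfl)
    · exact Or.inl ⟨h1, h.trans h2⟩
    · exact Or.inr rfl
  have hgimeas : Measurable gi := hgim.measurable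
  have hcIcc : ∀ q : ℝ, max a (min q b) ∈ Set.Icc a b :=
    fun q => ⟨le_max_left _ _, max_le hab.le (min_le_right _ _)⟩
  have key1 : ∀ y ∈ Set.Ioc (gu a) (gu b), gu (gi y) = y := by
    rintro y ⟨hy1, hy2⟩
    have hge : y ≤ gu (gi y) := by
      rcases hmem y with ⟨_, h2⟩ | h
      · exact h2
      · rw [Set.mem_singleton_iff] at h; rw [h]; exact hy2
    obtain ⟨x, hx, hgx⟩ := intermediate_value_Icc hab.le hc.continuousOn ⟨hy1.le, hy2⟩
    have hle : gi y ≤ x := csInf_le (hbdd y) (Or.inl ⟨hx, hgx.ge⟩)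
    exact le_antisymm ((hm (hgiIcc y) hx hle).trans hgx.le) hge
  have key2 : ∀ y ∈ Set.Ioc (gu a) (gu b), ∀ q : ℝ, gi y ≤ q ↔ y ≤ fu q := by
    rintro y hy q
    constructor
    · intro h
      rw [hfu, ← key1 y hy]
      exact hm (hgiIcc y) (hcIcc q) (le_max_of_le_right (le_min h (hgiIcc y).2))
    · intro h
      rw [hfu] at h
      have h1 : gi y ≤ max a (min q b) := csInf_le (hbdd y) (Or.inl ⟨hcIcc q, h⟩)
      rcases le_or_gt a q with hq | hq
      · exact h1.trans (max_le hq (min_le_left _ _))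
      · exfalso
        rw [min_eq_left (hq.le.trans hab.le), max_eq_left hq.le] at h
        exact absurd (hy.1.trans_le h) (lt_irrefl _)
  set ν : Measure ℝ := Measure.map gi (volume.restrict (Set.Ioc (gu a) (gu b))) with hν
  have hext : fu.measure = ν := by
    refine Measure.ext_of_Ioc' _ _ (fun p q _ => by
      rw [fu.measure_Ioc]; exact ENNReal.ofReal_ne_top) (fun p q hpq => ?_)
    rw [fu.measure_Ioc, hν, Measure.map_apply hgimeas measurableSet_Ioc,
      Measure.restrict_apply (hgimeas measurableSet_Ioc)]
    have hset : gi ⁻¹' (Set.Ioc p q) ∩ Set.Ioc (gu a) (gu b)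
        = Set.Ioc (max (gu a) (fu p)) (min (gu b) (fu q)) := by
      ext y
      simp only [Set.mem_inter_iff, Set.mem_preimage, Set.mem_Ioc, max_lt_iff, le_min_iff]
      constructor
      · rintro ⟨⟨hpy, hyq⟩, hy1, hy2⟩
        have k2 := key2 y ⟨hy1, hy2⟩
        refine ⟨⟨hy1, ?_⟩, hy2, (k2 q).1 hyq⟩
        by_contra hcon
        push_neg at hcon
        exact absurd ((k2 p).2 hcon) (not_le.2 hpy)
      · rintro ⟨⟨hy1, hfp⟩, hy2, hfq⟩
        have k2 := key2 y ⟨hy1, hy2⟩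
        refine ⟨⟨?_, (k2 q).2 hfq⟩, hy1, hy2⟩
        by_contra hcon
        push_neg at hcon
        exact absurd ((k2 p).1 hcon) (not_le.2 hfp)
    rw [hset, Real.volume_Ioc]
    have e1 : max (gu a) (fu p) = fu p := by
      rw [hfu]; exact max_eq_right (hm ⟨le_rfl, hab.le⟩ (hcIcc p) (le_max_left _ _))
    have e2 : min (gu b) (fu q) = fu q := by
      rw [hfu]; exact min_eq_right (hm (hcIcc q) ⟨hab.le, le_rfl⟩ (max_le hab.le (min_le_right _ _)))
    rw [e1, e2]
  rw [hext, hν, Measure.map_apply hgimeas hS,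
    Measure.restrict_apply (hgimeas hS)]
  refine measure_mono ?_
  rintro y ⟨hyS, hy⟩
  exact ⟨gi y, hyS, key1 y hy⟩

lemma core (I : Set ℝ) (hne : I.Nonempty) (hconn : I.OrdConnected)
    (hbb : BddBelow I) (hba : BddAbove I)
    (u v : ℝ → ℝ) (hu : MonotoneOn u I) (hv : MonotoneOn v I)
    (hul : ∀ s ∈ I, ∀ t ∈ I, s ≤ t → u t - u s ≤ t - s)
    (hvl : ∀ s ∈ I, ∀ t ∈ I, s ≤ t → v t - v s ≤ t - s)
    (hinc : ∀ s ∈ I, ∀ t ∈ I, s ≤ t → t - s ≤ (u t - u s) + (v t - v s))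
    (S : Set ℝ) (hS : MeasurableSet S) (hSI : S ⊆ I) :
    volume S ≤ volume (u '' S) + volume (v '' S) := by
  set a := sInf I with ha
  set b := sSup I with hb
  have hab : a ≤ b := csInf_le_csSup hne hbb hba
  have hIab : I ⊆ Set.Icc a b := fun x hx => ⟨csInf_le hbb hx, le_csSup hba hx⟩
  rcases eq_or_lt_of_le hab with heq | hlt
  · -- degenerate: I ⊆ {a}
    have : S ⊆ {a} := fun x hx => by
      have h2 := hIab (hSI hx); rw [← heq] at h2
      exact le_antisymm h2.2 h2.1
    calc volume S ≤ volume {a} := measure_mono this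
      _ = 0 := Real.volume_singleton
      _ ≤ _ := zero_le
  -- main case
  have hIoo : Set.Ioo a b ⊆ I := by
    rintro x ⟨hax, hxb⟩
    obtain ⟨p, hp, hpx⟩ := exists_lt_of_csInf_lt hne hax
    obtain ⟨q, hq, hxq⟩ := exists_lt_of_lt_csSup hne hxb
    exact hconn.out hp hq ⟨hpx.le, hxq.le⟩
  -- Lipschitz
  have hlipu : LipschitzOnWith 1 u I := by
    rw [lipschitzOnWith_iff_dist_le_mul]
    intro x hx y hy
    rw [NNReal.coe_one, one_mul, Real.dist_eq, Real.dist_eq]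
    rcases le_total x y with h | h
    · rw [abs_of_nonpos (by linarith [hu hx hy h]), abs_of_nonpos (by linarith)]
      linarith [hul x hx y hy h]
    · rw [abs_of_nonneg (by linarith [hu hy hx h]), abs_of_nonneg (by linarith)]
      linarith [hul y hy x hx h]
  have hlipv : LipschitzOnWith 1 v I := by
    rw [lipschitzOnWith_iff_dist_le_mul]
    intro x hx y hy
    rw [NNReal.coe_one, one_mul, Real.dist_eq, Real.dist_eq]
    rcases le_total x y with h | h
    · rw [abs_of_nonpos (by linarith [hv hx hy h]), abs_of_nonpos (by linarith)]
      linarith [hvl x hx y hy h]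
    · rw [abs_of_nonneg (by linarith [hv hy hx h]), abs_of_nonneg (by linarith)]
      linarith [hvl y hy x hx h]
  obtain ⟨gu, hgulip, hgueq⟩ := hlipu.extend_real
  obtain ⟨gv, hgvlip, hgveq⟩ := hlipv.extend_real
  have hguc : Continuous gu := hgulip.continuous
  have hgvc : Continuous gv := hgvlip.continuous
  have hgum : MonotoneOn gu (Set.Icc a b) := by
    refine monotoneOn_Icc_of_Ioo hguc ?_
    intro x hx y hy hxy
    rw [← hgueq (hIoo hx), ← hgueq (hIoo hy)]
    exact hu (hIoo hx) (hIoo hy) hxy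
  have hgvm : MonotoneOn gv (Set.Icc a b) := by
    refine monotoneOn_Icc_of_Ioo hgvc ?_
    intro x hx y hy hxy
    rw [← hgveq (hIoo hx), ← hgveq (hIoo hy)]
    exact hv (hIoo hx) (hIoo hy) hxy
  have hFm : MonotoneOn (fun x => gu x + gv x - x) (Set.Icc a b) := by
    refine monotoneOn_Icc_of_Ioo (by continuity) ?_
    intro x hx y hy hxy
    have := hinc x (hIoo hx) y (hIoo hy) hxy
    simp only
    rw [← hgueq (hIoo hx), ← hgueq (hIoo hy), ← hgveq (hIoo hx), ← hgveq (hIoo hy)]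
    linarith
  -- clamp
  set c : ℝ → ℝ := fun x => max a (min x b) with hcdef
  have hcm : Monotone c := fun x y h => max_le_max le_rfl (min_le_min h le_rfl)
  have hcc : Continuous c := continuous_const.max (continuous_id.min continuous_const)
  have hcIcc : ∀ q : ℝ, c q ∈ Set.Icc a b :=
    fun q => ⟨le_max_left _ _, max_le hab (min_le_right _ _)⟩
  have hcid : ∀ x ∈ Set.Icc a b, c x = x := fun x hx => by
    rw [hcdef]; simp only; rw [min_eq_left hx.2, max_eq_right hx.1]
  -- Stieltjes functions
  set fc : StieltjesFunction ℝ := ⟨c, hcm, fun x => hcc.continuousWithinAt⟩ with hfc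
  set fu : StieltjesFunction ℝ :=
    ⟨fun x => gu (c x), fun x y h => hgum (hcIcc x) (hcIcc y) (hcm h),
      fun x => (hguc.comp hcc).continuousWithinAt⟩ with hfu
  set fv : StieltjesFunction ℝ :=
    ⟨fun x => gv (c x), fun x y h => hgvm (hcIcc x) (hcIcc y) (hcm h),
      fun x => (hgvc.comp hcc).continuousWithinAt⟩ with hfv
  set fw : StieltjesFunction ℝ :=
    ⟨fun x => gu (c x) + gv (c x) - c x,
      fun x y h => hFm (hcIcc x) (hcIcc y) (hcm h),
      fun x => (((hguc.comp hcc).add (hgvc.comp hcc)).sub hcc).continuousWithinAt⟩ with hfw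
  -- M1
  have hM1 : fu.measure + fv.measure = fc.measure + fw.measure := by
    refine Measure.ext_of_Ioc' _ _ (fun p q _ => by
      rw [Measure.add_apply, fu.measure_Ioc, fv.measure_Ioc]
      exact ENNReal.add_ne_top.2 ⟨ENNReal.ofReal_ne_top, ENNReal.ofReal_ne_top⟩)
      (fun p q hpq => ?_)
    rw [Measure.add_apply, Measure.add_apply, fu.measure_Ioc, fv.measure_Ioc,
      fc.measure_Ioc, fw.measure_Ioc,
      ← ENNReal.ofReal_add (sub_nonneg.2 (fu.mono hpq.le)) (sub_nonneg.2 (fv.mono hpq.le)),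
      ← ENNReal.ofReal_add (sub_nonneg.2 (fc.mono hpq.le)) (sub_nonneg.2 (fw.mono hpq.le))]
    congr 1
    show (gu (c q) - gu (c p)) + (gv (c q) - gv (c p)) =
      (c q - c p) + ((gu (c q) + gv (c q) - c q) - (gu (c p) + gv (c p) - c p))
    ring
  -- assemble
  have hScc : S ⊆ Set.Icc a b := fun x hx => hIab (hSI hx)
  have hv1 : volume S = fc.measure S := by
    rw [clamp_measure hab fc (fun x => rfl), Measure.restrict_apply hS,
      Set.inter_eq_self_of_subset_left hScc]
  have hv2 : fc.measure S ≤ fu.measure S + fv.measure S := by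
    have h2 : fu.measure S + fv.measure S = fc.measure S + fw.measure S := by
      rw [← Measure.add_apply, ← Measure.add_apply, hM1]
    rw [h2]
    exact le_add_right le_rfl
  have hv3 : fu.measure S ≤ volume (u '' S) := by
    have him : gu '' S = u '' S := by
      refine Set.image_congr ?_
      intro x hx; exact (hgueq (hSI hx)).symm
    rw [← him]
    exact stieltjes_le_image hlt gu hguc hgum S hS fu (fun x => rfl)
  have hv4 : fv.measure S ≤ volume (v '' S) := by
    have him : gv '' S = v '' S := by
      refine Set.image_congr ?_
      intro x hx; exact (hgveq (hSI hx)).symm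
    rw [← him]
    exact stieltjes_le_image hlt gv hgvc hgvm S hS fv (fun x => rfl)
  calc volume S = fc.measure S := hv1
    _ ≤ fu.measure S + fv.measure S := hv2
    _ ≤ _ := add_le_add hv3 hv4

lemma neg_image_volume (f : ℝ → ℝ) (S : Set ℝ) :
    volume ((fun x => -(f x)) '' S) = volume (f '' S) := by
  have h : (fun x => -(f x)) '' S = (-1 : ℝ) • (f '' S) := by
    ext y; constructor
    · rintro ⟨x, hx, rfl⟩; exact ⟨f x, ⟨x, hx, rfl⟩, by simp⟩
    · rintro ⟨z, ⟨x, hx, rfl⟩, rfl⟩; exact ⟨x, hx, by simp⟩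
  rw [h, Measure.addHaar_smul]; simp

lemma signfix (I S : Set ℝ) (f : ℝ → ℝ)
    (h : MonotoneOn f I ∨ AntitoneOn f I) :
    ∃ u : ℝ → ℝ, MonotoneOn u I ∧ volume (u '' S) = volume (f '' S) ∧
      (∀ p q, edist (u p) (u q) = edist (f p) (f q)) ∧
      (∀ s t : ℝ, |u t - u s| = |f t - f s|) := by
  rcases h with h | h
  · exact ⟨f, h, rfl, fun _ _ => rfl, fun _ _ => rfl⟩
  · refine ⟨fun x => -(f x), fun p hp q hq hpq => neg_le_neg (h hp hq hpq),
      neg_image_volume f S, fun p q => edist_neg_neg _ _, fun s t => by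
        rw [show -f t - -f s = -(f t - f s) by ring, abs_neg]⟩

lemma step2 (I : Set ℝ) (hI : MeasurableSet I) (hconn : I.OrdConnected)
    (hbb : BddBelow I) (hba : BddAbove I) (γ : ℝ → ℝ × ℝ)
    (hx : MonotoneOn (fun s => (γ s).1) I ∨ AntitoneOn (fun s => (γ s).1) I)
    (hy : MonotoneOn (fun s => (γ s).2) I ∨ AntitoneOn (fun s => (γ s).2) I)
    (harc : ∀ s ∈ I, ∀ t ∈ I, s ≤ t →
      eVariationOn γ (I ∩ Set.Icc s t) = ENNReal.ofReal (t - s))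
    (S : Set ℝ) (hS : MeasurableSet S) (hSI : S ⊆ I) :
    volume S ≤ volume ((fun s => (γ s).1) '' S) + volume ((fun s => (γ s).2) '' S) := by
  by_cases hne : I.Nonempty
  swap
  · rw [Set.not_nonempty_iff_eq_empty] at hne
    have : S = ∅ := Set.eq_empty_of_subset_empty (hne ▸ hSI)
    simp [this]
  obtain ⟨u, hu, huvol, huedist, huabs⟩ := signfix I S _ hx
  obtain ⟨v, hv, hvvol, hvedist, hvabs⟩ := signfix I S _ hy
  -- Lipschitz estimates
  have hlip : ∀ s ∈ I, ∀ t ∈ I, s ≤ t → dist (γ s) (γ t) ≤ t - s := by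
    intro s hs t ht hst
    have h1 : edist (γ s) (γ t) ≤ ENNReal.ofReal (t - s) := by
      rw [← harc s hs t ht hst]
      exact eVariationOn.edist_le γ ⟨hs, le_rfl, hst⟩ ⟨ht, hst, le_rfl⟩
    rw [edist_dist] at h1
    exact (ENNReal.ofReal_le_ofReal_iff (by linarith)).1 h1
  have hul : ∀ s ∈ I, ∀ t ∈ I, s ≤ t → u t - u s ≤ t - s := by
    intro s hs t ht hst
    have h2 : |u t - u s| ≤ t - s := by
      rw [huabs]
      refine le_trans ?_ (hlip s hs t ht hst)
      rw [Prod.dist_eq, Real.dist_eq, abs_sub_comm]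
      exact le_max_left _ _
    exact (abs_le.1 h2).2
  have hvl : ∀ s ∈ I, ∀ t ∈ I, s ≤ t → v t - v s ≤ t - s := by
    intro s hs t ht hst
    have h2 : |v t - v s| ≤ t - s := by
      rw [hvabs]
      refine le_trans ?_ (hlip s hs t ht hst)
      rw [Prod.dist_eq, Real.dist_eq, abs_sub_comm]
      exact le_max_right _ _
    exact (abs_le.1 h2).2
  -- increments
  have hinc : ∀ s ∈ I, ∀ t ∈ I, s ≤ t → t - s ≤ (u t - u s) + (v t - v s) := by
    intro s hs t ht hst
    have hedist : ∀ p q : ℝ, edist (γ p) (γ q) ≤ edist (u p) (u q) + edist (v p) (v q) := by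
      intro p q
      rw [Prod.edist_eq, huedist, hvedist]
      exact max_le (le_add_right le_rfl) (le_add_left le_rfl)
    have h1 : ENNReal.ofReal (t - s)
        ≤ ENNReal.ofReal (u t - u s) + ENNReal.ofReal (v t - v s) := by
      rw [← harc s hs t ht hst]
      refine (evar_prod_le γ u v hedist _).trans ?_
      exact add_le_add (hu.eVariationOn_le hs ht) (hv.eVariationOn_le hs ht)
    have h2 : 0 ≤ u t - u s := sub_nonneg.2 (hu hs ht hst)
    have h3 : 0 ≤ v t - v s := sub_nonneg.2 (hv hs ht hst)
    rw [← ENNReal.ofReal_add h2 h3] at h1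
    exact (ENNReal.ofReal_le_ofReal_iff (by linarith)).1 h1
  have := core I hne hconn hbb hba u v hu hv hul hvl hinc S hS hSI
  rwa [huvol, hvvol] at this

/-- A monotone rectifiable curve parametrized by arclength is well-projected with
constants `k_x = k_y = 1`. -/
theorem stmt3 (I : Set ℝ) (hI : MeasurableSet I) (hIconn : I.OrdConnected)
    (γ : ℝ → ℝ × ℝ) (hγ : Measurable γ)
    (hx : MonotoneOn (fun s => (γ s).1) I ∨ AntitoneOn (fun s => (γ s).1) I)
    (hy : MonotoneOn (fun s => (γ s).2) I ∨ AntitoneOn (fun s => (γ s).2) I)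
    (harc : ∀ s ∈ I, ∀ t ∈ I, s ≤ t →
      eVariationOn γ (I ∩ Set.Icc s t) = ENNReal.ofReal (t - s))
    (A : Set (ℝ × ℝ)) (hA : MeasurableSet A) :
    Measure.map γ (volume.restrict I) A ≤
      volume (Prod.fst '' A) + volume (Prod.snd '' A) := by
  rw [Measure.map_apply hγ hA, Measure.restrict_apply (hγ hA)]
  set S : Set ℝ := γ ⁻¹' A ∩ I with hSdef
  have hSm : MeasurableSet S := (hγ hA).inter hI
  have hcover : S = ⋃ n : ℕ, S ∩ Set.Icc (-(n : ℝ)) n := by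
    ext x
    simp only [Set.mem_iUnion, Set.mem_inter_iff, Set.mem_Icc]
    constructor
    · intro hx'
      refine ⟨⌈|x|⌉₊, hx', ?_, ?_⟩
      · have h1 : |x| ≤ (⌈|x|⌉₊ : ℝ) := Nat.le_ceil _
        linarith [neg_abs_le x]
      · exact (le_abs_self x).trans (Nat.le_ceil _)
    · rintro ⟨n, h, _⟩; exact h
  have hmono : Monotone (fun n : ℕ => S ∩ Set.Icc (-(n : ℝ)) n) := by
    intro m n hmn
    apply Set.inter_subset_inter_right
    apply Set.Icc_subset_Icc
    · exact neg_le_neg (by exact_mod_cast hmn)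
    · exact_mod_cast hmn
  rw [hcover, hmono.directed_le.measure_iUnion]
  refine iSup_le fun n => ?_
  set In := I ∩ Set.Icc (-(n : ℝ)) n with hIn
  have harc' : ∀ s ∈ In, ∀ t ∈ In, s ≤ t →
      eVariationOn γ (In ∩ Set.Icc s t) = ENNReal.ofReal (t - s) := by
    intro s hs t ht hst
    have : In ∩ Set.Icc s t = I ∩ Set.Icc s t := by
      ext x
      simp only [hIn, Set.mem_inter_iff, Set.mem_Icc]
      constructor
      · rintro ⟨⟨h1, _⟩, h2⟩; exact ⟨h1, h2⟩
      · rintro ⟨h1, h2, h3⟩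
        exact ⟨⟨h1, hs.2.1.trans h2, h3.trans ht.2.2⟩, h2, h3⟩
    rw [this]
    exact harc s hs.1 t ht.1 hst
  have key := step2 In (hI.inter measurableSet_Icc)
    (hIconn.inter Set.ordConnected_Icc)
    (BddBelow.mono Set.inter_subset_right bddBelow_Icc)
    (BddAbove.mono Set.inter_subset_right bddAbove_Icc) γ
    (hx.imp (fun h => h.mono Set.inter_subset_left) (fun h => h.mono Set.inter_subset_left))
    (hy.imp (fun h => h.mono Set.inter_subset_left) (fun h => h.mono Set.inter_subset_left))
    harc' (S ∩ Set.Icc (-(n : ℝ)) n) (hSm.inter measurableSet_Icc)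
    (fun x hx' => ⟨hx'.1.2, hx'.2⟩)
  refine key.trans (add_le_add (measure_mono ?_) (measure_mono ?_))
  · rintro _ ⟨s, hs, rfl⟩
    exact ⟨γ s, hs.1.1, rfl⟩
  · rintro _ ⟨s, hs, rfl⟩
    exact ⟨γ s, hs.1.1, rfl⟩
end

section
/- For any integer N ≥ 1, any x > 0 and ψ ∈ (0, π/2), and any M distinct points on the segment {Re z = x, 0 < Im z < x·tan ψ}, the union A of radial segments of length ε issuing outward from these points (with ε small enough that the segments have disjoint radial projections) has 1-dimensional measure |A| = Mε while its x-projection satisfies |A_x| < ε and its y-projection satisfies |A_y| < |A|·sin ψ. Consequently, there is no pair of constants (k_x, k_y) such that every simple discontinuous radial curve γ in the sector 0 < arg z < φ satisfies μ_γ(A) ≤ k_x|A_x| + k_y|A_y| for all Borel A. -/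
open MeasureTheory

/-- A simple discontinuous radial curve in the sector `0 < arg z < φ`: a finite family of
radial segments `[r_{n-1} e^{i α_n}, r_n e^{i α_n}]` with `0 ≤ r₀ < r₁ < ⋯ < r_N` and
angles `α_n ∈ (0, φ)`. -/
structure SimpleRadialCurve (φ : ℝ) where
  N : ℕ
  r : ℕ → ℝ
  angle : ℕ → ℝ
  r0_nonneg : 0 ≤ r 0
  r_strictMono : ∀ n < N, r n < r (n + 1)
  angle_mem : ∀ n, 1 ≤ n → n ≤ N → angle n ∈ Set.Ioo 0 φ

/-- The total arclength measure of a simple discontinuous radial curve: the sum of the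
1-dimensional Hausdorff measures restricted to its radial segments. -/
noncomputable def SimpleRadialCurve.arclength {φ : ℝ} (γ : SimpleRadialCurve φ) :
    Measure ℂ :=
  ∑ n ∈ Finset.range γ.N,
    (μH[1] : Measure ℂ).restrict
      (segment ℝ (γ.r n • Complex.exp (γ.angle (n + 1) * Complex.I))
        (γ.r (n + 1) • Complex.exp (γ.angle (n + 1) * Complex.I)))

lemma measurableSet_segment' (x y : ℂ) : MeasurableSet (segment ℝ x y) := by
  rw [segment_eq_image_lineMap]
  exact ((isCompact_Icc : IsCompact (Set.Icc (0:ℝ) 1)).image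
    (AffineMap.lineMap x y).continuous_of_finiteDimensional).measurableSet

lemma re_image_segment (a b : ℝ) (w : ℂ) :
    Complex.re '' segment ℝ (a • w) (b • w) = segment ℝ (a * w.re) (b * w.re) := by
  have h := image_segment ℝ Complex.reLm.toAffineMap (a • w) (b • w)
  simpa [LinearMap.coe_toAffineMap, Complex.reLm_coe, Complex.smul_re] using h

lemma im_image_segment (a b : ℝ) (w : ℂ) :
    Complex.im '' segment ℝ (a • w) (b • w) = segment ℝ (a * w.im) (b * w.im) := by
  have h := image_segment ℝ Complex.imLm.toAffineMap (a • w) (b • w)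
  simpa [LinearMap.coe_toAffineMap, Complex.imLm_coe, Complex.smul_im] using h

set_option maxHeartbeats 1000000 in
/-- There is no uniform well-projectedness estimate for the class of all simple
discontinuous radial curves in a sector: no pair of constants `(k_x, k_y)` works for
all such curves. -/
theorem stmt7 (φ : ℝ) (hφ : φ ∈ Set.Ioo 0 (Real.pi / 2)) :
    ¬ ∃ kx ky : ℝ, 0 ≤ kx ∧ 0 ≤ ky ∧
      ∀ γ : SimpleRadialCurve φ, ∀ A : Set ℂ, MeasurableSet A →
        γ.arclength A ≤
          ENNReal.ofReal kx * volume (Complex.re '' A) +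
          ENNReal.ofReal ky * volume (Complex.im '' A) := by
  obtain ⟨hφ0, hφ2⟩ := hφ
  have hπ : 0 < Real.pi := Real.pi_pos
  rintro ⟨kx, ky, hkx, hky, H⟩
  -- a small-angle bound β
  set β : ℝ := min (φ / 2) (1 / (2 * (ky + 1))) with hβdef
  have hβ0 : 0 < β := lt_min (by linarith) (by positivity)
  have hβφ : β < φ := (min_le_left _ _).trans_lt (by linarith)
  have hβpi : β < Real.pi / 2 := hβφ.trans hφ2
  have hβky : ky * β ≤ 1 / 2 := by
    have h1 : β ≤ 1 / (2 * (ky + 1)) := min_le_right _ _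
    have h2 : ky * β ≤ ky * (1 / (2 * (ky + 1))) := mul_le_mul_of_nonneg_left h1 hky
    have h3 : ky * (1 / (2 * (ky + 1))) ≤ 1 / 2 := by
      rw [mul_one_div, div_le_div_iff₀ (by positivity) (by norm_num)]
      nlinarith
    linarith
  -- the number of small segments
  set M : ℕ := ⌈2 * kx⌉₊ + 2 with hMdef
  have hM2 : 2 ≤ M := by omega
  have hM0 : (0:ℝ) < M := by positivity
  have hMkx : 2 * kx < (M : ℝ) := by
    have h := Nat.le_ceil (2 * kx)
    have : (M : ℝ) = (⌈2 * kx⌉₊ : ℝ) + 2 := by rw [hMdef]; push_cast; ring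
    linarith
  -- angles and radii
  set α : ℕ → ℝ := fun m => (m + 1) * (β / (M + 1)) with hαdef
  have hα0 : ∀ m, 0 < α m := fun m => by positivity
  have hαβ : ∀ m ≤ M, α m ≤ β := by
    intro m hm
    have h1 : ((m:ℝ) + 1) ≤ (M:ℝ) + 1 := by
      have : (m:ℝ) ≤ (M:ℝ) := by exact_mod_cast hm
      linarith
    have : α m ≤ ((M:ℝ) + 1) * (β / (M + 1)) :=
      mul_le_mul_of_nonneg_right h1 (by positivity)
    have h2 : ((M:ℝ) + 1) * (β / (M + 1)) = β := by field_simp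
    linarith
  have hαmono : ∀ m, α m < α (m + 1) := by
    intro m
    have h : ((m:ℝ) + 1) < (((m+1 : ℕ)):ℝ) + 1 := by push_cast; linarith
    exact mul_lt_mul_of_pos_right h (by positivity)
  have hcos : ∀ m ≤ M, 0 < Real.cos (α m) := fun m hm =>
    Real.cos_pos_of_mem_Ioo ⟨by linarith [hα0 m], lt_of_le_of_lt (hαβ m hm) hβpi⟩
  set ρ : ℕ → ℝ := fun m => (Real.cos (α m))⁻¹ with hρdef
  have hρ0 : ∀ m ≤ M, 0 < ρ m := fun m hm => inv_pos.mpr (hcos m hm)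
  have hρmono : ∀ m, m + 1 ≤ M → ρ m < ρ (m + 1) := by
    intro m hm
    have hclt : Real.cos (α (m + 1)) < Real.cos (α m) :=
      Real.cos_lt_cos_of_nonneg_of_le_pi (hα0 m).le
        (by linarith [hαβ (m+1) hm, hβpi]) (hαmono m)
    exact inv_strictAnti₀ (hcos (m + 1) hm) hclt
  -- the segment length ε
  have hMne : (Finset.range (M - 1)).Nonempty := Finset.nonempty_range_iff.mpr (by omega)
  set g : ℝ := (Finset.range (M - 1)).inf' hMne (fun m => ρ (m + 1) - ρ m) with hgdef
  have hg_le : ∀ m, m < M - 1 → g ≤ ρ (m + 1) - ρ m := fun m hm =>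
    Finset.inf'_le _ (Finset.mem_range.mpr hm)
  have hg0 : 0 < g := by
    rw [hgdef, Finset.lt_inf'_iff]
    intro m hm
    rw [Finset.mem_range] at hm
    have := hρmono m (by omega)
    linarith
  set ε : ℝ := g / 2 with hεdef
  have hε0 : 0 < ε := by positivity
  have hεgap : ∀ m, m < M - 1 → ρ m + ε < ρ (m + 1) := by
    intro m hm
    have h1 := hg_le m hm
    have h2 : ε < g := by rw [hεdef]; linarith
    linarith
  -- the curve
  set γ : SimpleRadialCurve φ :=
    { N := 2 * M - 1
      r := fun n => ρ (n / 2) + if n % 2 = 1 then ε else 0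
      angle := fun n => α ((n - 1) / 2)
      r0_nonneg := by
        have := hρ0 0 (by omega)
        norm_num
        linarith
      r_strictMono := by
        intro n hn
        rcases Nat.even_or_odd n with ⟨m, hm⟩ | ⟨m, hm⟩
        · subst hm
          have e1 : (m + m) / 2 = m := by omega
          have e2 : (m + m) % 2 = 0 := by omega
          have e3 : (m + m + 1) / 2 = m := by omega
          have e4 : (m + m + 1) % 2 = 1 := by omega
          simp only [e1, e2, e3, e4]
          norm_num [hε0]
        · subst hm
          have e1 : (2 * m + 1) / 2 = m := by omega
          have e2 : (2 * m + 1) % 2 = 1 := by omega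
          have e3 : (2 * m + 1 + 1) / 2 = m + 1 := by omega
          have e4 : (2 * m + 1 + 1) % 2 = 0 := by omega
          simp only [e1, e2, e3, e4]
          norm_num
          exact hεgap m (by omega)
      angle_mem := by
        intro n h1 hN
        exact ⟨hα0 _, lt_of_le_of_lt (hαβ _ (by omega)) hβφ⟩ } with hγdef
  -- the set A
  set z : ℕ → ℂ := fun m => Complex.exp ((α m : ℂ) * Complex.I) with hzdef
  set S : ℕ → Set ℂ := fun m => segment ℝ (ρ m • z m) ((ρ m + ε) • z m) with hSdef
  set A : Set ℂ := ⋃ m ∈ Finset.range M, S m with hAdef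
  have hA : MeasurableSet A :=
    MeasurableSet.biUnion (Finset.range M).countable_toSet
      (fun m _ => measurableSet_segment' _ _)
  -- identification of the even-indexed segments of γ with S m
  have hseg : ∀ m, segment ℝ
      (γ.r (2*m) • Complex.exp (γ.angle (2*m + 1) * Complex.I))
      (γ.r (2*m + 1) • Complex.exp (γ.angle (2*m + 1) * Complex.I)) = S m := by
    intro m
    have e1 : (2 * m) / 2 = m := by omega
    have e2 : (2 * m) % 2 = 0 := by omega
    have e3 : (2 * m + 1) / 2 = m := by omega
    have e4 : (2 * m + 1) % 2 = 1 := by omega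
    have e5 : (2 * m + 1 - 1) / 2 = m := by omega
    simp only [hγdef, e1, e2, e3, e4, e5]
    norm_num [hSdef, hzdef]
  -- norm of z m
  have hz1 : ∀ m, ‖z m‖ = 1 := fun m => Complex.norm_exp_ofReal_mul_I (α m)
  -- lower bound for the arclength of A
  have harc : ENNReal.ofReal (M * ε) ≤ γ.arclength A := by
    set F : ℕ → ENNReal := fun n =>
      ((μH[1] : Measure ℂ).restrict
        (segment ℝ (γ.r n • Complex.exp (γ.angle (n + 1) * Complex.I))
          (γ.r (n + 1) • Complex.exp (γ.angle (n + 1) * Complex.I)))) A with hFdef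
    have hsum : γ.arclength A = ∑ n ∈ Finset.range γ.N, F n := by
      rw [SimpleRadialCurve.arclength, Measure.finset_sum_apply]
    have hterm : ∀ m ∈ Finset.range M, ENNReal.ofReal ε ≤ F (2 * m) := by
      intro m hm
      rw [hFdef]
      simp only []
      rw [Measure.restrict_apply hA, hseg m]
      have hsub : S m ⊆ A ∩ S m := by
        intro x hx
        exact ⟨Set.mem_biUnion hm hx, hx⟩
      calc ENNReal.ofReal ε = μH[1] (S m) := by
            rw [hSdef]
            simp only []
            rw [hausdorffMeasure_segment, edist_dist, dist_eq_norm]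
            have hd : ρ m • z m - (ρ m + ε) • z m = (-ε) • z m := by
              rw [← sub_smul]; ring_nf
            rw [hd, norm_smul, hz1 m]
            simp [abs_of_pos hε0]
        _ ≤ μH[1] (A ∩ S m) := measure_mono hsub
    have himage : (Finset.range M).image (fun m => 2 * m) ⊆ Finset.range γ.N := by
      intro n hn
      rw [Finset.mem_image] at hn
      obtain ⟨m, hm, rfl⟩ := hn
      rw [Finset.mem_range] at hm ⊢
      show 2 * m < 2 * M - 1
      omega
    calc ENNReal.ofReal (M * ε) = (Finset.range M).card • ENNReal.ofReal ε := by
          rw [Finset.card_range, nsmul_eq_mul, ← ENNReal.ofReal_natCast M,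
            ← ENNReal.ofReal_mul (Nat.cast_nonneg M)]
      _ ≤ ∑ m ∈ Finset.range M, F (2 * m) := Finset.card_nsmul_le_sum _ _ _ hterm
      _ = ∑ n ∈ (Finset.range M).image (fun m => 2 * m), F n := by
          rw [Finset.sum_image (fun a _ b _ h => by omega)]
      _ ≤ ∑ n ∈ Finset.range γ.N, F n := Finset.sum_le_sum_of_subset himage
      _ = γ.arclength A := hsum.symm
  -- upper bound for the real projection
  have hre : volume (Complex.re '' A) ≤ ENNReal.ofReal ε := by
    have hsub : Complex.re '' A ⊆ Set.Icc 1 (1 + ε) := by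
      rw [hAdef, Set.image_iUnion₂]
      apply Set.iUnion₂_subset
      intro m hm
      rw [Finset.mem_range] at hm
      have hmM : m ≤ M := hm.le
      have hzre : (z m).re = Real.cos (α m) := by
        simp only [hzdef]; exact Complex.exp_ofReal_mul_I_re (α m)
      have hre_seg : Complex.re '' S m =
          segment ℝ (ρ m * Real.cos (α m)) ((ρ m + ε) * Real.cos (α m)) := by
        simp only [hSdef]; rw [re_image_segment, hzre]
      have h1 : ρ m * Real.cos (α m) = 1 := inv_mul_cancel₀ (hcos m hmM).ne'
      have hc0 := hcos m hmM
      have hc1 : Real.cos (α m) ≤ 1 := Real.cos_le_one _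
      rw [hre_seg, segment_eq_Icc (by nlinarith)]
      apply Set.Icc_subset_Icc
      · rw [h1]
      · have h2 : (ρ m + ε) * Real.cos (α m) = 1 + ε * Real.cos (α m) := by
          rw [add_mul, h1]
        nlinarith
    calc volume (Complex.re '' A) ≤ volume (Set.Icc 1 (1 + ε)) := measure_mono hsub
      _ = ENNReal.ofReal ε := by rw [Real.volume_Icc]; norm_num
  -- upper bound for the imaginary projection
  have him : volume (Complex.im '' A) ≤ ENNReal.ofReal (M * (ε * β)) := by
    rw [hAdef, Set.image_iUnion₂]
    calc volume (⋃ m ∈ Finset.range M, Complex.im '' S m)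
        ≤ ∑ m ∈ Finset.range M, volume (Complex.im '' S m) :=
          measure_biUnion_finset_le _ _
      _ ≤ ∑ _m ∈ Finset.range M, ENNReal.ofReal (ε * β) := by
          apply Finset.sum_le_sum
          intro m hm
          rw [Finset.mem_range] at hm
          have hmM : m ≤ M := hm.le
          have hzim : (z m).im = Real.sin (α m) := by
            simp only [hzdef]; exact Complex.exp_ofReal_mul_I_im (α m)
          have him_seg : Complex.im '' S m =
              segment ℝ (ρ m * Real.sin (α m)) ((ρ m + ε) * Real.sin (α m)) := by
            simp only [hSdef]; rw [im_image_segment, hzim]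
          have hsin0 : 0 ≤ Real.sin (α m) :=
            Real.sin_nonneg_of_nonneg_of_le_pi (hα0 m).le
              (by linarith [hαβ m hmM, hβpi, hπ])
          have hρm := hρ0 m hmM
          rw [him_seg, segment_eq_Icc (by nlinarith), Real.volume_Icc]
          apply ENNReal.ofReal_le_ofReal
          have heq : (ρ m + ε) * Real.sin (α m) - ρ m * Real.sin (α m)
              = ε * Real.sin (α m) := by ring
          rw [heq]
          have hsin_le : Real.sin (α m) ≤ β := (Real.sin_le (hα0 m).le).trans (hαβ m hmM)
          nlinarith
      _ = (Finset.range M).card • ENNReal.ofReal (ε * β) := by rw [Finset.sum_const]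
      _ = ENNReal.ofReal (M * (ε * β)) := by
          rw [Finset.card_range, nsmul_eq_mul, ← ENNReal.ofReal_natCast M,
            ← ENNReal.ofReal_mul (Nat.cast_nonneg M)]
  -- combine
  have hfinal : ENNReal.ofReal (M * ε) ≤ ENNReal.ofReal (kx * ε + ky * (M * (ε * β))) := by
    calc ENNReal.ofReal (M * ε) ≤ γ.arclength A := harc
      _ ≤ ENNReal.ofReal kx * volume (Complex.re '' A) +
          ENNReal.ofReal ky * volume (Complex.im '' A) := H γ A hA
      _ ≤ ENNReal.ofReal kx * ENNReal.ofReal ε +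
          ENNReal.ofReal ky * ENNReal.ofReal (M * (ε * β)) :=
          add_le_add (mul_le_mul_right hre _) (mul_le_mul_right him _)
      _ = ENNReal.ofReal (kx * ε + ky * (M * (ε * β))) := by
          rw [← ENNReal.ofReal_mul hkx, ← ENNReal.ofReal_mul hky,
            ← ENNReal.ofReal_add (by positivity) (by positivity)]
  rw [ENNReal.ofReal_le_ofReal_iff (by positivity)] at hfinal
  have hkey : ky * β * ((M:ℝ) * ε) ≤ 1 / 2 * ((M:ℝ) * ε) :=
    mul_le_mul_of_nonneg_right hβky (by positivity)
  nlinarith [mul_pos (sub_pos.mpr hMkx) hε0]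
end

section
/- Let φ ∈ (0, π/2), ν ∈ ℕ, c > 1. Let γ be a simple discontinuous radial curve in the sector 0 < arg z < φ, consisting of radial segments γ_n = [r_{n-1}e^{iα_n}, r_n e^{iα_n}) with 0 ≤ r_0 < r_1 < ⋯ < r_N ≤ ∞, α_n ∈ (0, φ), and satisfying r_{n+ν} ≥ c^ν r_n whenever n + ν ≤ N. Then for every x > 0, the number of indices n such that the x-projection J_n = [r_{n-1}cos α_n, r_n cos α_n) contains x is at most (log sec φ)/(log c) + ν + 2. -/
/-- Multiplicity bound for the `x`-projections of a simple discontinuous radial curve in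
the sector `0 < arg z < φ` satisfying the growth condition `r_{n+ν} ≥ c^ν r_n`: for every
`x > 0`, the number of indices `n` with `x ∈ J_n = [r_{n-1} cos α_n, r_n cos α_n)` is at
most `log(sec φ)/log c + ν + 2`. -/
theorem stmt8 (φ : ℝ) (hφ : φ ∈ Set.Ioo 0 (Real.pi / 2)) (ν : ℕ) (hν : 0 < ν)
    (c : ℝ) (hc : 1 < c) (N : ℕ) (r : ℕ → ℝ) (α : ℕ → ℝ)
    (hr0 : 0 ≤ r 0) (hr : ∀ n < N, r n < r (n + 1))
    (hα : ∀ n, 1 ≤ n → n ≤ N → α n ∈ Set.Ioo 0 φ)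
    (hgeom : ∀ n, n + ν ≤ N → c ^ ν * r n ≤ r (n + ν))
    (x : ℝ) (hx : 0 < x) (S : Finset ℕ)
    (hS : ∀ n ∈ S, 1 ≤ n ∧ n ≤ N ∧
      x ∈ Set.Ico (r (n - 1) * Real.cos (α n)) (r n * Real.cos (α n))) :
    (S.card : ℝ) ≤ Real.log (1 / Real.cos φ) / Real.log c + ν + 2 := by
  have hπ := Real.pi_pos
  have hcosφ : 0 < Real.cos φ :=
    Real.cos_pos_of_mem_Ioo ⟨by linarith [hφ.1], hφ.2⟩
  have hcosφ1 : Real.cos φ ≤ 1 := Real.cos_le_one φ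
  have hlogc : 0 < Real.log c := Real.log_pos hc
  have hL : 0 ≤ Real.log (1 / Real.cos φ) :=
    Real.log_nonneg (by rw [le_div_iff₀ hcosφ]; linarith)
  have hbase : (0:ℝ) ≤ Real.log (1 / Real.cos φ) / Real.log c :=
    div_nonneg hL hlogc.le
  have hνR : (1:ℝ) ≤ (ν:ℝ) := by exact_mod_cast hν
  -- monotonicity of r
  have rmono0 : ∀ i d : ℕ, i + d ≤ N → r i ≤ r (i + d) := by
    intro i d
    induction d with
    | zero => intro _; simp
    | succ d ih =>
      intro h
      calc r i ≤ r (i + d) := ih (by omega)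
        _ ≤ r (i + d + 1) := (hr (i + d) (by omega)).le
  have rmono : ∀ i j : ℕ, i ≤ j → j ≤ N → r i ≤ r j := by
    intro i j hij hjN
    obtain ⟨d, rfl⟩ := Nat.exists_eq_add_of_le hij
    exact rmono0 i d hjN
  rcases Finset.eq_empty_or_nonempty S with rfl | hne
  · simp only [Finset.card_empty, Nat.cast_zero]
    linarith
  obtain ⟨m, hmS, hmin⟩ : ∃ m ∈ S, ∀ n ∈ S, m ≤ n :=
    ⟨S.min' hne, S.min'_mem hne, fun n hn => S.min'_le n hn⟩
  obtain ⟨M, hMS, hmax⟩ : ∃ M ∈ S, ∀ n ∈ S, n ≤ M :=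
    ⟨S.max' hne, S.max'_mem hne, fun n hn => S.le_max' n hn⟩
  obtain ⟨hm1, hmN, hxm⟩ := hS m hmS
  obtain ⟨hM1, hMN, hxM⟩ := hS M hMS
  have hmleM : m ≤ M := hmin M hMS
  -- card bound
  have hcard : S.card ≤ M - m + 1 := by
    have hsub : S ⊆ Finset.Icc m M := fun n hn =>
      Finset.mem_Icc.mpr ⟨hmin n hn, hmax n hn⟩
    calc S.card ≤ (Finset.Icc m M).card := Finset.card_le_card hsub
      _ = M - m + 1 := by rw [Nat.card_Icc]; omega
  rcases le_or_gt M m with hMm | hmM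
  · -- single-point case
    have h1 : S.card ≤ 1 := by omega
    have h1' : (S.card : ℝ) ≤ 1 := by exact_mod_cast h1
    linarith
  -- main case : m < M
  have hmM1 : m ≤ M - 1 := by omega
  have hM1N : M - 1 ≤ N := by omega
  -- x < r m
  have hrm0 : 0 ≤ r m := le_trans hr0 (rmono 0 m (by omega) hmN)
  have hcosm := hα m hm1 hmN
  have hxrm : x < r m := by
    have h1 : Real.cos (α m) ≤ 1 := Real.cos_le_one _
    have := hxm.2
    nlinarith
  -- r (M-1) ≤ x / cos φ
  have hcosM := hα M hM1 hMN
  have hcosMφ : Real.cos φ ≤ Real.cos (α M) :=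
    Real.cos_le_cos_of_nonneg_of_le_pi hcosM.1.le (by linarith [hφ.2]) hcosM.2.le
  have hrM10 : 0 ≤ r (M - 1) := le_trans hr0 (rmono 0 (M - 1) (by omega) hM1N)
  have hrM1x : r (M - 1) * Real.cos φ ≤ x := by
    have := hxM.1
    nlinarith
  -- geometric growth
  obtain ⟨k, hkd, hdk⟩ : ∃ k : ℕ, k * ν ≤ M - 1 - m ∧ M - 1 - m < k * ν + ν :=
    ⟨(M - 1 - m) / ν, Nat.div_mul_le_self _ _, by
      calc M - 1 - m < ((M - 1 - m) / ν + 1) * ν :=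
            (Nat.div_lt_iff_lt_mul hν).mp (Nat.lt_succ_self _)
        _ = (M - 1 - m) / ν * ν + ν := by ring⟩
  have hgeo : ∀ j : ℕ, m + j * ν ≤ N → c ^ (j * ν) * r m ≤ r (m + j * ν) := by
    intro j
    induction j with
    | zero => intro _; simp
    | succ j ih =>
      intro h
      have hrel : (j + 1) * ν = j * ν + ν := by ring
      have hcν : (0:ℝ) < c ^ ν := by positivity
      have h1 : c ^ (j * ν) * r m ≤ r (m + j * ν) := ih (by omega)
      have h2 : c ^ ν * r (m + j * ν) ≤ r (m + j * ν + ν) := hgeom (m + j * ν) (by omega)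
      have h3 : m + (j + 1) * ν = m + j * ν + ν := by omega
      rw [h3]
      calc c ^ ((j + 1) * ν) * r m = c ^ ν * (c ^ (j * ν) * r m) := by
            rw [← mul_assoc, ← pow_add]; ring_nf
        _ ≤ c ^ ν * r (m + j * ν) := by nlinarith
        _ ≤ r (m + j * ν + ν) := h2
  have hmk : m + k * ν ≤ M - 1 := by omega
  have hgeo' : c ^ (k * ν) * r m ≤ r (M - 1) :=
    le_trans (hgeo k (by omega)) (rmono (m + k * ν) (M - 1) hmk hM1N)
  -- conclude c^(kν) ≤ 1/cos φ
  have hck : (0:ℝ) < c ^ (k * ν) := by positivity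
  have hckbound : c ^ (k * ν) ≤ 1 / Real.cos φ := by
    have h1 : c ^ (k * ν) * x < c ^ (k * ν) * r m := by nlinarith
    have h2 : c ^ (k * ν) * x < x / Real.cos φ := by
      have h3 : r (M - 1) ≤ x / Real.cos φ := by
        rw [le_div_iff₀ hcosφ]; linarith
      linarith
    have h4 : c ^ (k * ν) * x * Real.cos φ < x := (lt_div_iff₀ hcosφ).mp h2
    rw [le_div_iff₀ hcosφ]
    have h5 : (c ^ (k * ν) * Real.cos φ) * x < 1 * x := by
      calc (c ^ (k * ν) * Real.cos φ) * x = c ^ (k * ν) * x * Real.cos φ := by ring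
        _ < x := h4
        _ = 1 * x := (one_mul x).symm
    exact le_of_lt (lt_of_mul_lt_mul_right h5 hx.le)
  have hlog : (↑(k * ν) : ℝ) * Real.log c ≤ Real.log (1 / Real.cos φ) := by
    have := Real.log_le_log hck hckbound
    rwa [Real.log_pow] at this
  have hkν : ((k * ν : ℕ) : ℝ) ≤ Real.log (1 / Real.cos φ) / Real.log c := by
    rw [le_div_iff₀ hlogc]
    exact hlog
  -- final count
  have hcard2 : S.card ≤ k * ν + ν + 1 := by omega
  have hcast : (S.card : ℝ) ≤ ((k * ν : ℕ) : ℝ) + (ν : ℝ) + 1 := by exact_mod_cast hcard2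
  linarith
end

section
/- Let φ ∈ (0, π/2), ν ∈ ℕ, c > 1, and let γ be a simple discontinuous radial curve in the sector Φ_φ = {0 < arg z < φ} satisfying r_{n+ν} ≥ c^ν r_n whenever n + ν ≤ N. Then the total arclength measure μ_γ satisfies μ_γ(A) ≤ κ|A_x| for every Borel set A ⊂ Φ_φ, where κ = ((log sec φ)/(log c) + ν + 2)·sec φ. -/
open MeasureTheory

open scoped ENNReal NNReal

lemma myMono {N : ℕ} {r : ℕ → ℝ} (hr : ∀ n < N, r n < r (n + 1)) :
    ∀ m n, m ≤ n → n ≤ N → r m ≤ r n := by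
  intro m n hmn hnN
  induction n with
  | zero => simp_all
  | succ k ih =>
    rcases Nat.lt_or_ge m (k+1) with h | h
    · have : r m ≤ r k := ih (Nat.lt_succ_iff.mp h) (le_of_lt hnN)
      exact this.trans (le_of_lt (hr k hnN))
    · have : m = k + 1 := le_antisymm hmn h
      simp [this]

lemma myGeom {c : ℝ} (hc : 0 < c) {ν N : ℕ} {r : ℕ → ℝ}
    (hgeom : ∀ n, n + ν ≤ N → c ^ ν * r n ≤ r (n + ν)) :
    ∀ j n, 0 ≤ r n → n + j * ν ≤ N → c ^ (j * ν) * r n ≤ r (n + j * ν) := by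
  intro j
  induction j with
  | zero => intro n hn _; simp
  | succ k ih =>
    intro n hn hle
    rw [Nat.succ_mul] at hle ⊢
    have h1 : n + k * ν ≤ N := by omega
    have ihk := ih n hn h1
    have h2 : (n + k * ν) + ν ≤ N := by omega
    have h3 := hgeom (n + k * ν) h2
    have hpow : (0:ℝ) < c ^ ν := pow_pos hc ν
    calc c ^ (k * ν + ν) * r n = c ^ ν * (c ^ (k * ν) * r n) := by
          rw [← mul_assoc, ← pow_add]; ring_nf
      _ ≤ c ^ ν * r (n + k * ν) := by nlinarith
      _ ≤ r (n + (k * ν + ν)) := by rw [← add_assoc]; exact h3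

lemma myCard {c : ℝ} (hc : 1 < c) {ν N : ℕ} (hν : 0 < ν) {r : ℕ → ℝ}
    (hmono : ∀ m n, m ≤ n → n ≤ N → r m ≤ r n)
    (hgeom2 : ∀ j n, 0 ≤ r n → n + j * ν ≤ N → c ^ (j * ν) * r n ≤ r (n + j * ν))
    (hnonneg : ∀ n ≤ N, 0 ≤ r n)
    {x L : ℝ} (hx : 0 < x) (hL : 1 ≤ L)
    (S : Finset ℕ) (hS : ∀ n ∈ S, n < N)
    (h1 : ∀ n ∈ S, r n ≤ x * L) (h2 : ∀ n ∈ S, x ≤ r (n + 1)) :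
    (S.card : ℝ) ≤ Real.log L / Real.log c + ν + 2 := by
  have hlogc : 0 < Real.log c := Real.log_pos hc
  have hlogL : 0 ≤ Real.log L := Real.log_nonneg hL
  have hK : 0 ≤ Real.log L / Real.log c := div_nonneg hlogL hlogc.le
  rcases S.eq_empty_or_nonempty with rfl | hne
  · simp; positivity
  set m := S.min' hne with hm
  set M := S.max' hne with hM
  have hmM : m ≤ M := S.min'_le _ (S.max'_mem hne)
  have hcard : S.card ≤ M + 1 - m := by
    have : S ⊆ Finset.Icc m M := fun n hn => Finset.mem_Icc.mpr ⟨S.min'_le n hn, S.le_max' n hn⟩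
    calc S.card ≤ (Finset.Icc m M).card := Finset.card_le_card this
      _ = M + 1 - m := Nat.card_Icc m M
  have hcardR : (S.card : ℝ) ≤ (M : ℝ) - m + 1 := by
    have h := (Nat.cast_le (α := ℝ)).mpr hcard
    rw [Nat.cast_sub (by omega)] at h
    push_cast at h; linarith
  -- suffices to bound M - m
  have key : (M : ℝ) ≤ (m : ℝ) + Real.log L / Real.log c + ν + 1 := by
    by_cases hcase : m + 1 ≤ M
    · set d := M - (m + 1) with hd
      have hMd : M = m + 1 + d := by omega
      set j := d / ν with hj
      have hjd : j * ν ≤ d := Nat.div_mul_le_self d ν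
      have hdj : (d : ℝ) ≤ (j * ν : ℕ) + (ν : ℝ) - 1 := by
        have h5 : d % ν < ν := Nat.mod_lt _ hν
        have h6 : d = j * ν + d % ν := by rw [hj, mul_comm]; exact (Nat.div_add_mod d ν).symm
        have : ((j * ν : ℕ) : ℝ) + (d % ν : ℕ) = (d : ℝ) := by exact_mod_cast congrArg (Nat.cast (R := ℝ)) h6.symm
        have h8 : ((d % ν : ℕ) : ℝ) ≤ (ν : ℝ) - 1 := by
          have : d % ν ≤ ν - 1 := by omega
          have := (Nat.cast_le (α := ℝ)).mpr this
          rw [Nat.cast_sub (by omega)] at this; simpa using this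
        linarith
      have hMN : M < N := hS _ (S.max'_mem hne)
      have hr1 : x ≤ r (m + 1) := h2 _ (S.min'_mem hne)
      have hr1' : 0 ≤ r (m + 1) := le_trans hx.le hr1
      have hle : (m + 1) + j * ν ≤ N := by omega
      have hg := hgeom2 j (m + 1) hr1' hle
      have hmono2 : r (m + 1 + j * ν) ≤ r M := hmono _ _ (by omega) (by omega)
      have hrM : r M ≤ x * L := h1 _ (S.max'_mem hne)
      have hpow : c ^ (j * ν) * x ≤ x * L := by
        have : c ^ (j * ν) * x ≤ c ^ (j * ν) * r (m + 1) := by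
          have := pow_pos (lt_trans one_pos hc) (j * ν); nlinarith
        linarith
      have hcl : c ^ (j * ν) ≤ L := by
        have := (mul_le_mul_iff_of_pos_right hx).mp (by linarith [hpow] : c ^ (j * ν) * x ≤ L * x)
        linarith
      have hlog : (j * ν : ℕ) * Real.log c ≤ Real.log L := by
        have h7 := Real.log_le_log (pow_pos (lt_trans one_pos hc) (j * ν)) hcl
        rwa [Real.log_pow] at h7
      have hjν : ((j * ν : ℕ) : ℝ) ≤ Real.log L / Real.log c := by
        rw [le_div_iff₀ hlogc]; exact hlog
      have : (M : ℝ) = m + 1 + d := by rw [hMd]; push_cast; ring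
      rw [this]
      have : (d:ℝ) ≤ Real.log L / Real.log c + ν - 1 := by linarith
      linarith
    · have : M = m := by omega
      rw [this]
      have : (1:ℝ) ≤ ν := by exact_mod_cast hν
      linarith
  linarith

open MeasureTheory

lemma myIso (θ : ℝ) : Isometry (fun t : ℝ => t • Complex.exp (↑θ * Complex.I)) := by
  apply Isometry.of_dist_eq
  intro t s
  simp only [dist_eq_norm, ← sub_smul, norm_smul, Complex.norm_exp_ofReal_mul_I, mul_one,
    Real.norm_eq_abs]

lemma mySeg (θ : ℝ) {a b : ℝ} (hab : a ≤ b) :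
    segment ℝ (a • Complex.exp (↑θ * Complex.I)) (b • Complex.exp (↑θ * Complex.I))
      = (fun t : ℝ => t • Complex.exp (↑θ * Complex.I)) '' Set.Icc a b := by
  have h := image_segment ℝ
    ((LinearMap.toSpanSingleton ℝ ℂ (Complex.exp (↑θ * Complex.I))).toAffineMap) a b
  rw [segment_eq_Icc hab] at h
  simpa [LinearMap.toSpanSingleton_apply] using h.symm

lemma myInter (θ : ℝ) {a b : ℝ} (hab : a ≤ b) (A : Set ℂ) :
    A ∩ segment ℝ (a • Complex.exp (↑θ * Complex.I)) (b • Complex.exp (↑θ * Complex.I))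
      = (fun t : ℝ => t • Complex.exp (↑θ * Complex.I)) ''
          ((fun t : ℝ => t • Complex.exp (↑θ * Complex.I)) ⁻¹' A ∩ Set.Icc a b) := by
  rw [mySeg θ hab, Set.inter_comm ((fun t : ℝ => t • Complex.exp (↑θ * Complex.I)) ⁻¹' A),
    Set.image_inter_preimage, Set.inter_comm]

lemma myHaus (θ : ℝ) {a b : ℝ} (hab : a ≤ b) (A : Set ℂ) :
    μH[1] (A ∩ segment ℝ (a • Complex.exp (↑θ * Complex.I)) (b • Complex.exp (↑θ * Complex.I)))
      = volume ((fun t : ℝ => t • Complex.exp (↑θ * Complex.I)) ⁻¹' A ∩ Set.Icc a b) := by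
  rw [myInter θ hab A, (myIso θ).hausdorffMeasure_image (Or.inl zero_le_one),
    ← MeasureTheory.hausdorffMeasure_real]

lemma myProj (θ : ℝ) {a b : ℝ} (hab : a ≤ b) (A : Set ℂ) :
    Complex.re '' (A ∩ segment ℝ (a • Complex.exp (↑θ * Complex.I))
        (b • Complex.exp (↑θ * Complex.I)))
      = (fun t : ℝ => Real.cos θ * t) ''
          ((fun t : ℝ => t • Complex.exp (↑θ * Complex.I)) ⁻¹' A ∩ Set.Icc a b) := by
  rw [myInter θ hab A, Set.image_image]
  apply Set.image_congr
  intro t _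
  show (t • Complex.exp (↑θ * Complex.I)).re = Real.cos θ * t
  rw [Complex.smul_re, Complex.exp_ofReal_mul_I_re, smul_eq_mul, mul_comm]

lemma myImgPre {c₀ : ℝ} (hc₀ : c₀ ≠ 0) (T : Set ℝ) :
    (fun t => c₀ * t) '' T = (fun t => c₀⁻¹ * t) ⁻¹' T := by
  ext x
  constructor
  · rintro ⟨t, ht, rfl⟩
    simpa [Set.mem_preimage, inv_mul_cancel_left₀ hc₀] using ht
  · intro h
    exact ⟨c₀⁻¹ * x, h, by field_simp⟩

lemma myVolImage {c₀ : ℝ} (hc₀ : c₀ ≠ 0) (T : Set ℝ) :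
    volume ((fun t => c₀ * t) '' T) = ENNReal.ofReal |c₀| * volume T := by
  rw [myImgPre hc₀, Real.volume_preimage_mul_left (inv_ne_zero hc₀), inv_inv]

/-- A simple discontinuous radial curve in the sector `Φ_φ = {0 < arg z < φ}` satisfying
the growth condition `r_{n+ν} ≥ c^ν r_n` is well-projected in the `x`-direction with
constant `κ = (log(sec φ)/log c + ν + 2)·sec φ`. -/
theorem stmt9 (φ : ℝ) (hφ : φ ∈ Set.Ioo 0 (Real.pi / 2)) (ν : ℕ) (hν : 0 < ν)
    (c : ℝ) (hc : 1 < c) (N : ℕ) (r : ℕ → ℝ) (α : ℕ → ℝ)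
    (hr0 : 0 ≤ r 0) (hr : ∀ n < N, r n < r (n + 1))
    (hα : ∀ n, 1 ≤ n → n ≤ N → α n ∈ Set.Ioo 0 φ)
    (hgeom : ∀ n, n + ν ≤ N → c ^ ν * r n ≤ r (n + ν))
    (A : Set ℂ) (hA : MeasurableSet A)
    (hAsub : A ⊆ {z : ℂ | 0 < Complex.arg z ∧ Complex.arg z < φ}) :
    (∑ n ∈ Finset.range N,
        (μH[1] : Measure ℂ).restrict
          (segment ℝ (r n • Complex.exp (α (n + 1) * Complex.I))
            (r (n + 1) • Complex.exp (α (n + 1) * Complex.I)))) A ≤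
      ENNReal.ofReal ((Real.log (1 / Real.cos φ) / Real.log c + ν + 2) * (1 / Real.cos φ)) *
        volume (Complex.re '' A) := by
  classical
  obtain ⟨hφ0, hφ2⟩ := hφ
  have hπ := Real.pi_pos
  have hcos : 0 < Real.cos φ := Real.cos_pos_of_mem_Ioo ⟨by linarith, hφ2⟩
  set L : ℝ := 1 / Real.cos φ with hLdef
  have hL : 1 ≤ L := one_le_one_div hcos (Real.cos_le_one φ)
  have hL0 : 0 < L := by positivity
  set K : ℝ := Real.log L / Real.log c with hKdef
  have hK0 : 0 ≤ K := div_nonneg (Real.log_nonneg hL) (Real.log_pos hc).le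
  have hmono := myMono hr
  have hnonneg : ∀ n ≤ N, 0 ≤ r n := fun n hn => hr0.trans (hmono 0 n (Nat.zero_le n) hn)
  have hgeom2 := myGeom (lt_trans one_pos hc) hgeom
  set T : ℕ → Set ℝ := fun n =>
    (fun t : ℝ => t • Complex.exp (↑(α (n+1)) * Complex.I)) ⁻¹' A ∩ Set.Icc (r n) (r (n+1))
    with hTdef
  set E : ℕ → Set ℝ := fun n =>
    Complex.re '' (A ∩ segment ℝ (r n • Complex.exp (↑(α (n+1)) * Complex.I))
      (r (n+1) • Complex.exp (↑(α (n+1)) * Complex.I))) with hEdef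
  have hTmeas : ∀ n, MeasurableSet (T n) := by
    intro n
    apply MeasurableSet.inter _ measurableSet_Icc
    exact (continuous_id.smul continuous_const).measurable hA
  have hcosθ : ∀ n < N, Real.cos φ ≤ Real.cos (α (n+1)) ∧ 0 < Real.cos (α (n+1)) := by
    intro n hn
    obtain ⟨h1, h2⟩ := hα (n+1) (by omega) (by omega)
    constructor
    · exact Real.cos_le_cos_of_nonneg_of_le_pi h1.le (by linarith) h2.le
    · exact Real.cos_pos_of_mem_Ioo ⟨by linarith, by linarith⟩
  have hEeq : ∀ n < N, E n = (fun t : ℝ => Real.cos (α (n+1)) * t) '' T n := by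
    intro n hn
    exact myProj (α (n+1)) (hr n hn).le A
  have hEmeas : ∀ n < N, MeasurableSet (E n) := by
    intro n hn
    rw [hEeq n hn, myImgPre (hcosθ n hn).2.ne']
    exact (measurable_const_mul _) (hTmeas n)
  have hvolE : ∀ n < N, volume (E n) = ENNReal.ofReal (Real.cos (α (n+1))) * volume (T n) := by
    intro n hn
    rw [hEeq n hn, myVolImage (hcosθ n hn).2.ne', abs_of_pos (hcosθ n hn).2]
  have hTle : ∀ n < N, volume (T n) ≤ ENNReal.ofReal L * volume (E n) := by
    intro n hn
    rw [hvolE n hn, ← mul_assoc, ← ENNReal.ofReal_mul hL0.le]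
    have h1 : 1 ≤ L * Real.cos (α (n+1)) := by
      rw [hLdef, one_div]
      rw [inv_mul_eq_div, le_div_iff₀ hcos]
      simpa using (hcosθ n hn).1
    calc volume (T n) = 1 * volume (T n) := (one_mul _).symm
      _ ≤ ENNReal.ofReal (L * Real.cos (α (n+1))) * volume (T n) :=
          mul_le_mul_left (ENNReal.one_le_ofReal.mpr h1) _
  have hrestrict : ∀ n < N,
      (μH[1] : Measure ℂ).restrict
        (segment ℝ (r n • Complex.exp (↑(α (n+1)) * Complex.I))
          (r (n+1) • Complex.exp (↑(α (n+1)) * Complex.I))) A = volume (T n) := by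
    intro n hn
    rw [Measure.restrict_apply hA, myHaus (α (n+1)) (hr n hn).le A]
  have hmem : ∀ n < N, ∀ x ∈ E n, 0 < x ∧ r n ≤ x * L ∧ x ≤ r (n+1) := by
    intro n hn x hx
    rw [hEeq n hn] at hx
    obtain ⟨t, ht, rfl⟩ := hx
    dsimp only
    obtain ⟨htA, htl, htr⟩ := ht
    have harg := hAsub htA
    dsimp only [Set.mem_setOf_eq] at harg
    have ht0 : 0 < t := by
      rcases (le_trans (hnonneg n (by omega)) htl).lt_or_eq with h | h
      · exact h
      · rw [← h, zero_smul] at harg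
        simp [Complex.arg_zero] at harg
    obtain ⟨hcle, hcpos⟩ := hcosθ n hn
    have hcos1 : Real.cos (α (n+1)) ≤ 1 := Real.cos_le_one _
    refine ⟨mul_pos hcpos ht0, ?_, ?_⟩
    · rw [hLdef, mul_one_div, le_div_iff₀ hcos]
      nlinarith [mul_le_mul_of_nonneg_right htl hcos.le, mul_le_mul_of_nonneg_left hcle ht0.le]
    · nlinarith [mul_le_mul_of_nonneg_right hcos1 ht0.le]
  have hEsub : ∀ n < N, E n ⊆ Complex.re '' A := by
    intro n hn
    rw [hEdef]
    exact Set.image_mono Set.inter_subset_left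
  set U : Set ℝ := ⋃ n ∈ Finset.range N, E n with hUdef
  have hUmeas : MeasurableSet U :=
    (Finset.range N).measurableSet_biUnion fun n hn => hEmeas n (Finset.mem_range.mp hn)
  have hUsub : U ⊆ Complex.re '' A :=
    Set.iUnion₂_subset fun n hn => hEsub n (Finset.mem_range.mp hn)
  have hpoint : ∀ x : ℝ, (∑ n ∈ Finset.range N, (E n).indicator (1 : ℝ → ℝ≥0∞) x)
      ≤ ENNReal.ofReal (K + ν + 2) * U.indicator (1 : ℝ → ℝ≥0∞) x := by
    intro x
    by_cases hxU : x ∈ U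
    · have h1 : U.indicator (1 : ℝ → ℝ≥0∞) x = 1 := Set.indicator_of_mem hxU 1
      rw [h1, mul_one]
      have hcard : (∑ n ∈ Finset.range N, (E n).indicator (1 : ℝ → ℝ≥0∞) x)
          = (((Finset.range N).filter (fun n => x ∈ E n)).card : ℝ≥0∞) := by
        rw [← Finset.sum_boole]
        apply Finset.sum_congr rfl
        intro n _
        simp [Set.indicator_apply]
      rw [hcard]
      obtain ⟨n₀, hn₀, hxE⟩ := Set.mem_iUnion₂.mp hxU
      have hx0 : 0 < x := (hmem n₀ (Finset.mem_range.mp hn₀) x hxE).1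
      have hbound := myCard hc hν hmono hgeom2 hnonneg hx0 hL
        ((Finset.range N).filter (fun n => x ∈ E n))
        (fun n hn => Finset.mem_range.mp (Finset.mem_filter.mp hn).1)
        (fun n hn => (hmem n (Finset.mem_range.mp (Finset.mem_filter.mp hn).1) x
          (Finset.mem_filter.mp hn).2).2.1)
        (fun n hn => (hmem n (Finset.mem_range.mp (Finset.mem_filter.mp hn).1) x
          (Finset.mem_filter.mp hn).2).2.2)
      rw [← ENNReal.ofReal_natCast]
      exact ENNReal.ofReal_le_ofReal hbound
    · have h0 : ∀ n ∈ Finset.range N, (E n).indicator (1 : ℝ → ℝ≥0∞) x = 0 := by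
        intro n hn
        apply Set.indicator_of_notMem
        intro hxE
        exact hxU (Set.mem_iUnion₂.mpr ⟨n, hn, hxE⟩)
      rw [Finset.sum_congr rfl h0]
      simp
  have hsum : (∑ n ∈ Finset.range N, volume (E n))
      ≤ ENNReal.ofReal (K + ν + 2) * volume (Complex.re '' A) := by
    calc (∑ n ∈ Finset.range N, volume (E n))
        = ∑ n ∈ Finset.range N, ∫⁻ x, (E n).indicator (1 : ℝ → ℝ≥0∞) x := by
          apply Finset.sum_congr rfl
          intro n hn
          rw [lintegral_indicator_one (hEmeas n (Finset.mem_range.mp hn))]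
      _ = ∫⁻ x, ∑ n ∈ Finset.range N, (E n).indicator (1 : ℝ → ℝ≥0∞) x := by
          rw [lintegral_finset_sum]
          intro n hn
          exact measurable_one.indicator (hEmeas n (Finset.mem_range.mp hn))
      _ ≤ ∫⁻ x, ENNReal.ofReal (K + ν + 2) * U.indicator (1 : ℝ → ℝ≥0∞) x :=
          lintegral_mono hpoint
      _ = ENNReal.ofReal (K + ν + 2) * volume U := by
          rw [lintegral_const_mul _ (measurable_one.indicator hUmeas),
            lintegral_indicator_one hUmeas]
      _ ≤ ENNReal.ofReal (K + ν + 2) * volume (Complex.re '' A) :=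
          mul_le_mul_right (measure_mono hUsub) _
  calc (∑ n ∈ Finset.range N,
        (μH[1] : Measure ℂ).restrict
          (segment ℝ (r n • Complex.exp (α (n + 1) * Complex.I))
            (r (n + 1) • Complex.exp (α (n + 1) * Complex.I)))) A
      = ∑ n ∈ Finset.range N, volume (T n) := by
        rw [Measure.finset_sum_apply]
        exact Finset.sum_congr rfl fun n hn => hrestrict n (Finset.mem_range.mp hn)
    _ ≤ ∑ n ∈ Finset.range N, ENNReal.ofReal L * volume (E n) :=
        Finset.sum_le_sum fun n hn => hTle n (Finset.mem_range.mp hn)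
    _ = ENNReal.ofReal L * ∑ n ∈ Finset.range N, volume (E n) := (Finset.mul_sum _ _ _).symm
    _ ≤ ENNReal.ofReal L * (ENNReal.ofReal (K + ν + 2) * volume (Complex.re '' A)) :=
        mul_le_mul_right hsum _
    _ = ENNReal.ofReal ((K + ν + 2) * L) * volume (Complex.re '' A) := by
        rw [← mul_assoc, ← ENNReal.ofReal_mul hL0.le, mul_comm L]
end

section
/- Fix α ∈ (0, π/2), ν ∈ ℕ, c > 0. Let {a_n}_{n≥1} be strictly increasing positive reals and {b_n}_{n≥1} positive reals with b_1 ≤ b_2 ≤ ⋯ and a_{n+ν} − a_n ≥ c·ν·b_n for all n ≥ 1. Let γ be the horizontal comb consisting of vertical segments γ_n = [a_n, a_n + i b_n]. Then in the rotated coordinate ξ = x cos α + y sin α, for every ξ ∈ ℝ the number of teeth whose ξ-projection J_n = [a_n cos α, a_n cos α + b_n sin α] contains ξ is at most (tan α)/c + ν + 1. -/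
/-- Multiplicity bound for the `ξ`-projections of the teeth of a semi-infinite horizontal
comb satisfying `b₁ ≤ b₂ ≤ ⋯` and `a_{n+ν} − a_n ≥ c·ν·b_n`: for every `ξ`, the number of
teeth whose `ξ`-projection `J_n = [a_n cos α, a_n cos α + b_n sin α]` contains `ξ` is at
most `tan α / c + ν + 1`. -/
theorem stmt10 (α : ℝ) (hα : α ∈ Set.Ioo 0 (Real.pi / 2)) (ν : ℕ) (hν : 0 < ν)
    (c : ℝ) (hc : 0 < c) (a b : ℕ → ℝ)
    (ha_pos : ∀ n, 1 ≤ n → 0 < a n) (ha : ∀ n, 1 ≤ n → a n < a (n + 1))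
    (hb_pos : ∀ n, 1 ≤ n → 0 < b n) (hb_mono : ∀ n, 1 ≤ n → b n ≤ b (n + 1))
    (hspace : ∀ n, 1 ≤ n → c * ν * b n ≤ a (n + ν) - a n)
    (ξ : ℝ) (S : Finset ℕ)
    (hS : ∀ n ∈ S, 1 ≤ n ∧
      ξ ∈ Set.Icc (a n * Real.cos α) (a n * Real.cos α + b n * Real.sin α)) :
    (S.card : ℝ) ≤ Real.tan α / c + ν + 1 := by
  have hcos : 0 < Real.cos α :=
    Real.cos_pos_of_mem_Ioo ⟨by linarith [hα.1, Real.pi_pos], hα.2⟩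
  have htan : 0 < Real.tan α := Real.tan_pos_of_pos_of_lt_pi_div_two hα.1 hα.2
  rcases S.eq_empty_or_nonempty with rfl | hne
  · simp
    positivity
  obtain ⟨m, hmS, hmmin⟩ : ∃ m ∈ S, ∀ n ∈ S, m ≤ n :=
    ⟨S.min' hne, S.min'_mem hne, fun n hn => S.min'_le n hn⟩
  obtain ⟨M, hMS, hMmax⟩ : ∃ M ∈ S, ∀ n ∈ S, n ≤ M :=
    ⟨S.max' hne, S.max'_mem hne, fun n hn => S.le_max' n hn⟩
  have hm1 : 1 ≤ m := (hS m hmS).1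
  have hmM : m ≤ M := hmmin M hMS
  have amono : ∀ p, 1 ≤ p → ∀ q, p ≤ q → a p ≤ a q := by
    intro p hp q hq
    induction q, hq using Nat.le_induction with
    | base => exact le_refl _
    | succ n hn ih => exact ih.trans (le_of_lt (ha n (hp.trans hn)))
  have bmono : ∀ p, 1 ≤ p → ∀ q, p ≤ q → b p ≤ b q := by
    intro p hp q hq
    induction q, hq using Nat.le_induction with
    | base => exact le_refl _
    | succ n hn ih => exact ih.trans (hb_mono n (hp.trans hn))
  have key : ∀ k : ℕ, a m + k * (c * ν * b m) ≤ a (m + k * ν) := by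
    intro k
    induction k with
    | zero => simp
    | succ k ih =>
      have h2 := hspace (m + k * ν) (by omega)
      have h3 : b m ≤ b (m + k * ν) := bmono m hm1 _ (by omega)
      have hcν : 0 < c * (ν : ℝ) := by positivity
      have hidx : m + (k + 1) * ν = m + k * ν + ν := by ring
      rw [hidx]
      have h4 : c * ν * b m ≤ c * ν * b (m + k * ν) := by nlinarith
      push_cast
      nlinarith
  obtain ⟨k, hkle, hklt⟩ : ∃ k : ℕ, m + k * ν ≤ M ∧ M - m < k * ν + ν := by
    refine ⟨(M - m) / ν, ?_, ?_⟩ <;>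
    · have h1 := Nat.div_add_mod' (M - m) ν
      have h2 := Nat.mod_lt (M - m) hν
      omega
  have hA := key k
  have haM : a (m + k * ν) ≤ a M := amono (m + k * ν) (by omega) M hkle
  obtain ⟨_, hξm⟩ := hS m hmS
  obtain ⟨_, hξM⟩ := hS M hMS
  have hbm : 0 < b m := hb_pos m hm1
  have hAM : (a M - a m) * Real.cos α ≤ b m * Real.sin α := by
    have h1 := hξm.2
    have h2 := hξM.1
    nlinarith
  have h1 : a M - a m ≤ b m * Real.tan α := by
    rw [Real.tan_eq_sin_div_cos, ← mul_div_assoc, le_div_iff₀ hcos]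
    exact hAM
  have hk : (k : ℝ) * (c * ν * b m) ≤ b m * Real.tan α := by linarith
  have hk2 : (k : ℝ) * ν ≤ Real.tan α / c := by
    rw [le_div_iff₀ hc]
    nlinarith
  have hcard : S.card ≤ k * ν + ν := by
    have hsub : S ⊆ Finset.Icc m M :=
      fun n hn => Finset.mem_Icc.mpr ⟨hmmin n hn, hMmax n hn⟩
    have h5 : S.card ≤ (Finset.Icc m M).card := Finset.card_le_card hsub
    rw [Nat.card_Icc] at h5
    omega
  have hcast : (S.card : ℝ) ≤ (k : ℝ) * ν + ν := by exact_mod_cast hcard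
  linarith
end

section
/- No horizontal comb is well-projected with respect to the standard coordinate axes: if γ is a compound curve consisting of vertical segments γ_n = [a_n, a_n + i b_n] with infinitely many teeth (a_n strictly increasing, b_n > 0), then for any constants k_x, k_y ≥ 0 there exists a Borel set A with μ_γ(A) > k_x|A_x| + k_y|A_y|. -/
open MeasureTheory

/-- No horizontal comb (with infinitely many vertical teeth `γ_n = [a_n, a_n + i b_n]`) is
well-projected with respect to the standard coordinate axes. -/
theorem stmt12 (a b : ℕ → ℝ) (ha : StrictMono a) (hb : ∀ n, 0 < b n)
    (kx ky : ℝ) (hkx : 0 ≤ kx) (hky : 0 ≤ ky) :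
    ∃ A : Set ℂ, MeasurableSet A ∧
      ENNReal.ofReal kx * volume (Complex.re '' A) +
        ENNReal.ofReal ky * volume (Complex.im '' A) <
      MeasureTheory.Measure.sum
        (fun n => (μH[1] : Measure ℂ).restrict
          (segment ℝ ((a n : ℂ)) ((a n : ℂ) + (b n : ℂ) * Complex.I))) A := by
  classical
  set N : ℕ := ⌈ky⌉₊ + 1 with hN
  have hNne : (Finset.range N).Nonempty := ⟨0, by simp [hN]⟩
  set β : ℝ := (Finset.range N).inf' hNne b with hβdef
  have hβle : ∀ n ∈ Finset.range N, β ≤ b n := fun n hn => Finset.inf'_le _ hn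
  have hβpos : 0 < β := by
    obtain ⟨m, hm, hmeq⟩ := Finset.exists_mem_eq_inf' hNne b
    rw [hβdef, hmeq]; exact hb m
  set A : Set ℂ := ⋃ n ∈ Finset.range N, segment ℝ ((a n : ℂ)) ((a n : ℂ) + (β : ℂ) * Complex.I)
    with hA
  have hseg_meas : ∀ (x y : ℂ), MeasurableSet (segment ℝ x y) := by
    intro x y
    have : IsCompact (segment ℝ x y) := by
      rw [segment_eq_image]
      exact (isCompact_Icc.image (by continuity))
    exact this.isClosed.measurableSet
  refine ⟨A, ?_, ?_⟩
  · exact MeasurableSet.biUnion (Finset.range N).countable_toSet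
      (fun n _ => hseg_meas _ _)
  -- image bounds
  have hre : volume (Complex.re '' A) = 0 := by
    have hsub : Complex.re '' A ⊆ ↑((Finset.range N).image a) := by
      rintro x ⟨z, hz, rfl⟩
      rw [hA] at hz
      simp only [Set.mem_iUnion] at hz
      obtain ⟨n, hn, hzn⟩ := hz
      have hconv : Convex ℝ {w : ℂ | w.re = a n} := by
        have : {w : ℂ | w.re = a n} = Complex.reLm ⁻¹' {a n} := rfl
        rw [this]
        exact (convex_singleton (a n)).linear_preimage Complex.reLm
      have : z.re = a n := by
        refine hconv.segment_subset ?_ ?_ hzn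
        · simp
        · simp
      simp only [Finset.coe_image, Set.mem_image, Finset.mem_coe]
      exact ⟨n, by simpa using hn, this.symm⟩
    exact measure_mono_null hsub (((Finset.range N).image a).finite_toSet.measure_zero volume)
  have him : volume (Complex.im '' A) ≤ ENNReal.ofReal β := by
    have hsub : Complex.im '' A ⊆ Set.Icc 0 β := by
      rintro x ⟨z, hz, rfl⟩
      rw [hA] at hz
      simp only [Set.mem_iUnion] at hz
      obtain ⟨n, hn, hzn⟩ := hz
      have hconv : Convex ℝ {w : ℂ | w.im ∈ Set.Icc 0 β} := by
        have : {w : ℂ | w.im ∈ Set.Icc 0 β} = Complex.imLm ⁻¹' Set.Icc 0 β := rfl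
        rw [this]
        exact (convex_Icc 0 β).linear_preimage Complex.imLm
      refine hconv.segment_subset ?_ ?_ hzn
      · simp [hβpos.le]
      · simp [hβpos.le]
    calc volume (Complex.im '' A) ≤ volume (Set.Icc 0 β) := measure_mono hsub
      _ = ENNReal.ofReal β := by rw [Real.volume_Icc, sub_zero]
  -- lower bound for RHS
  have hterm : ∀ n ∈ Finset.range N,
      ENNReal.ofReal β ≤ ((μH[1] : Measure ℂ).restrict
        (segment ℝ ((a n : ℂ)) ((a n : ℂ) + (b n : ℂ) * Complex.I))) A := by
    intro n hn
    rw [Measure.restrict_apply' (hseg_meas _ _)]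
    have hsub1 : segment ℝ ((a n : ℂ)) ((a n : ℂ) + (β : ℂ) * Complex.I) ⊆ A := by
      rw [hA]; intro z hz; exact Set.mem_biUnion hn hz
    have hmem : ((a n : ℂ) + (β : ℂ) * Complex.I) ∈
        segment ℝ ((a n : ℂ)) ((a n : ℂ) + (b n : ℂ) * Complex.I) := by
      refine ⟨1 - β / b n, β / b n, ?_, ?_, by ring, ?_⟩
      · have : β / b n ≤ 1 := (div_le_one (hb n)).2 (hβle n hn)
        linarith
      · exact div_nonneg hβpos.le (hb n).le
      · have hbne : (b n : ℂ) ≠ 0 := by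
          exact_mod_cast (hb n).ne'
        push_cast [Complex.real_smul]
        field_simp
        ring
    have hsub2 : segment ℝ ((a n : ℂ)) ((a n : ℂ) + (β : ℂ) * Complex.I) ⊆
        segment ℝ ((a n : ℂ)) ((a n : ℂ) + (b n : ℂ) * Complex.I) :=
      (convex_segment _ _).segment_subset (left_mem_segment _ _ _) hmem
    have hsubset : segment ℝ ((a n : ℂ)) ((a n : ℂ) + (β : ℂ) * Complex.I) ⊆
        A ∩ segment ℝ ((a n : ℂ)) ((a n : ℂ) + (b n : ℂ) * Complex.I) :=
      Set.subset_inter hsub1 hsub2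
    calc ENNReal.ofReal β
        = μH[1] (segment ℝ ((a n : ℂ)) ((a n : ℂ) + (β : ℂ) * Complex.I)) := by
          rw [hausdorffMeasure_segment, edist_dist, Complex.dist_eq]
          have : (a n : ℂ) - ((a n : ℂ) + (β : ℂ) * Complex.I) = -((β : ℂ) * Complex.I) := by
            ring
          rw [this]
          simp [abs_of_pos hβpos]
      _ ≤ _ := measure_mono hsubset
  have hRHS : (N : ENNReal) * ENNReal.ofReal β ≤
      MeasureTheory.Measure.sum
        (fun n => (μH[1] : Measure ℂ).restrict
          (segment ℝ ((a n : ℂ)) ((a n : ℂ) + (b n : ℂ) * Complex.I))) A := by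
    have hAmeas : MeasurableSet A := MeasurableSet.biUnion (Finset.range N).countable_toSet
      (fun n _ => hseg_meas _ _)
    rw [Measure.sum_apply _ hAmeas]
    calc (N : ENNReal) * ENNReal.ofReal β
        = ∑ n ∈ Finset.range N, ENNReal.ofReal β := by
          rw [Finset.sum_const, Finset.card_range, nsmul_eq_mul]
      _ ≤ ∑ n ∈ Finset.range N, ((μH[1] : Measure ℂ).restrict
          (segment ℝ ((a n : ℂ)) ((a n : ℂ) + (b n : ℂ) * Complex.I))) A :=
          Finset.sum_le_sum hterm
      _ ≤ _ := ENNReal.sum_le_tsum _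
  -- conclude
  have hLHS : ENNReal.ofReal kx * volume (Complex.re '' A) +
      ENNReal.ofReal ky * volume (Complex.im '' A) ≤
      ENNReal.ofReal ky * ENNReal.ofReal β := by
    rw [hre, mul_zero, zero_add]
    exact mul_le_mul_right him _
  refine lt_of_le_of_lt hLHS (lt_of_lt_of_le ?_ hRHS)
  have hkylt : ENNReal.ofReal ky < (N : ENNReal) := by
    rw [← ENNReal.ofReal_natCast, ENNReal.ofReal_lt_ofReal_iff (by positivity)]
    calc ky ≤ (⌈ky⌉₊ : ℝ) := Nat.le_ceil ky
      _ < (N : ℝ) := by exact_mod_cast Nat.lt_succ_self _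
  exact ENNReal.mul_lt_mul_left (ENNReal.ofReal_pos.2 hβpos).ne' ENNReal.ofReal_ne_top hkylt
end

section
/- Let {B_n} be non-overlapping axis-parallel rectangles, B_n having lower-left corner a_n and upper-right corner a_{n+1} + i b_n, with a_n strictly increasing, b_n > 0, b_1 ≤ b_2 ≤ ⋯, and a_{n+ν} − a_n ≥ c·ν·b_n for all n (ν ∈ ℕ, c > 0). Fix α ∈ (0, π/2) and let J_n = [a_n cos α, a_{n+1} cos α + b_n sin α] be the ξ-projection of B_n, where ξ = x cos α + y sin α. Then for every ξ ∈ ℝ, the number of indices n with ξ ∈ J_n is at most (tan α)/c + ν + 2. -/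
/-- Multiplicity bound for `ξ`-projections of the boxes `B_n` (lower-left corner `a_n`,
upper-right corner `a_{n+1} + i b_n`) of a boxed curve: for every `ξ`, the number of
indices `n` with `ξ ∈ J_n = [a_n cos α, a_{n+1} cos α + b_n sin α]` is at most
`tan α / c + ν + 2`. -/
theorem stmt13 (α : ℝ) (hα : α ∈ Set.Ioo 0 (Real.pi / 2)) (ν : ℕ) (hν : 0 < ν)
    (c : ℝ) (hc : 0 < c) (a b : ℕ → ℝ)
    (ha : StrictMono a) (hb_pos : ∀ n, 0 < b n) (hb_mono : Monotone b)
    (hspace : ∀ n, c * ν * b n ≤ a (n + ν) - a n)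
    (ξ : ℝ) (S : Finset ℕ)
    (hS : ∀ n ∈ S,
      ξ ∈ Set.Icc (a n * Real.cos α) (a (n + 1) * Real.cos α + b n * Real.sin α)) :
    (S.card : ℝ) ≤ Real.tan α / c + ν + 2 := by
  have hcos : 0 < Real.cos α :=
    Real.cos_pos_of_mem_Ioo ⟨by linarith [hα.1, Real.pi_pos], hα.2⟩
  have hsin : 0 < Real.sin α :=
    Real.sin_pos_of_pos_of_lt_pi hα.1 (by linarith [Real.pi_pos, hα.2])
  have htan : 0 < Real.tan α := by
    rw [Real.tan_eq_sin_div_cos]; positivity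
  have hνR : (0:ℝ) < (ν:ℝ) := by exact_mod_cast hν
  rcases S.eq_empty_or_nonempty with hE | hne
  · simp [hE]
    positivity
  · set m := S.min' hne with hm
    set M := S.max' hne with hM
    have hmS : m ∈ S := S.min'_mem hne
    have hMS : M ∈ S := S.max'_mem hne
    have hmM : m ≤ M := S.min'_le M hMS
    have hcard : S.card ≤ M - m + 1 := by
      have hsub : S ⊆ Finset.Icc m M := fun x hx =>
        Finset.mem_Icc.mpr ⟨S.min'_le x hx, S.le_max' x hx⟩
      have := Finset.card_le_card hsub
      rw [Nat.card_Icc] at this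
      omega
    have h1 : a M * Real.cos α ≤ ξ := (hS M hMS).1
    have h2 : ξ ≤ a (m + 1) * Real.cos α + b m * Real.sin α := (hS m hmS).2
    have hkey : (a M - a (m + 1)) * Real.cos α ≤ b m * Real.sin α := by nlinarith
    by_cases hcase : M ≤ m + 1 + ν
    · have hn : S.card ≤ ν + 2 := by omega
      have : (S.card : ℝ) ≤ (ν:ℝ) + 2 := by exact_mod_cast hn
      have hpos : 0 < Real.tan α / c := by positivity
      linarith
    · push_neg at hcase
      set d := M - (m + 1) with hd
      set q := d / ν with hq
      set r := d % ν with hr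
      have hdqr : d = ν * q + r := (Nat.div_add_mod d ν).symm
      have hrν : r < ν := Nat.mod_lt d hν
      have hstep : ∀ j : ℕ, (j:ℝ) * (c * ν * b m) ≤ a (m + 1 + j * ν) - a (m + 1) := by
        intro j
        induction j with
        | zero => simp
        | succ j ih =>
          have h1 := hspace (m + 1 + j * ν)
          have h2 : b m ≤ b (m + 1 + j * ν) := hb_mono (by omega)
          have h3 : c * ↑ν * b m ≤ c * ↑ν * b (m + 1 + j * ν) :=
            mul_le_mul_of_nonneg_left h2 (by positivity)
          have he : m + 1 + (j + 1) * ν = (m + 1 + j * ν) + ν := by ring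
          rw [he]
          push_cast
          nlinarith
      have hqM : m + 1 + q * ν ≤ M := by
        have : q * ν ≤ d := Nat.div_mul_le_self d ν
        omega
      have haM : a (m + 1 + q * ν) ≤ a M := ha.monotone hqM
      have hqa : (q:ℝ) * (c * ν * b m) ≤ a M - a (m + 1) := le_trans (hstep q) (by linarith)
      -- multiply by cos α and combine with hkey
      have hqsin : (q:ℝ) * (c * ν) * Real.cos α * b m ≤ Real.sin α * b m := by
        nlinarith [mul_le_mul_of_nonneg_right hqa hcos.le]
      have hqsin' : (q:ℝ) * (c * ν) * Real.cos α ≤ Real.sin α :=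
        (mul_le_mul_iff_of_pos_right (hb_pos m)).mp hqsin
      have hqtan : (q:ℝ) * ν ≤ Real.tan α / c := by
        rw [le_div_iff₀ hc, Real.tan_eq_sin_div_cos, le_div_iff₀ hcos]
        nlinarith [hqsin']
      have hnat : S.card ≤ ν * q + ν + 1 := by omega
      have hcast : (S.card : ℝ) ≤ (ν:ℝ) * q + ν + 1 := by exact_mod_cast hnat
      have : (ν:ℝ) * q ≤ Real.tan α / c := by linarith [hqtan, mul_comm (q:ℝ) (ν:ℝ)]
      linarith
end

section
/- For the measures μ_n of the Cantor-square construction, the estimate μ_n(A) ≤ √2·|A_ξ| for all Borel A implies μ_{n+1}(A) ≤ √2·|A_ξ| for all Borel A, where ξ = (x+y)/√2. The key step: writing A_j = A ∩ Q_j, one has |A_ξ| ≥ |(A₁)_ξ| + |(A₃)_ξ| + (1/2)(|(A₂)_ξ| + |(A₄)_ξ|) because the ξ-projections of A₁, A₃, and A₂∪A₄ are pairwise disjoint. -/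
open MeasureTheory
open scoped ENNReal

/-- The corner squares of the Cantor-square construction. -/
def cantorQ : Fin 4 → Set (ℝ × ℝ)
  | 0 => Set.Icc (0:ℝ) (1/3) ×ˢ Set.Icc (0:ℝ) (1/3)
  | 1 => Set.Icc (2/3:ℝ) 1 ×ˢ Set.Icc (0:ℝ) (1/3)
  | 2 => Set.Icc (2/3:ℝ) 1 ×ˢ Set.Icc (2/3:ℝ) 1
  | 3 => Set.Icc (0:ℝ) (1/3) ×ˢ Set.Icc (2/3:ℝ) 1

/-- The four homotheties of ratio 1/3 mapping the unit square onto the corner squares. -/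
noncomputable def cantorT : Fin 4 → ℝ × ℝ → ℝ × ℝ
  | 0 => fun p => (p.1 / 3, p.2 / 3)
  | 1 => fun p => (p.1 / 3 + 2 / 3, p.2 / 3)
  | 2 => fun p => (p.1 / 3 + 2 / 3, p.2 / 3 + 2 / 3)
  | 3 => fun p => (p.1 / 3, p.2 / 3 + 2 / 3)

/-- The weights `1/3, 1/6, 1/3, 1/6` of the Cantor-square construction. -/
noncomputable def cantorW : Fin 4 → ℝ≥0∞
  | 0 => 1 / 3
  | 1 => 1 / 6
  | 2 => 1 / 3
  | 3 => 1 / 6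

/-- The iterated measures of the Cantor-square construction. -/
noncomputable def cantorIter : ℕ → Measure (ℝ × ℝ)
  | 0 => volume.restrict (Set.Icc (0:ℝ) 1 ×ˢ Set.Icc (0:ℝ) 1)
  | n + 1 => ∑ j : Fin 4, cantorW j • Measure.map (cantorT j) (cantorIter n)

/-- The `ξ`-projection, `ξ = (x + y)/√2`. -/
noncomputable def xiProj (A : Set (ℝ × ℝ)) : Set ℝ :=
  (fun p : ℝ × ℝ => (p.1 + p.2) / Real.sqrt 2) '' A



lemma measurable_cantorT (j : Fin 4) : Measurable (cantorT j) := by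
  fin_cases j <;> simp only [cantorT] <;> fun_prop

lemma measurableSet_cantorQ (j : Fin 4) : MeasurableSet (cantorQ j) := by
  fin_cases j <;> exact measurableSet_Icc.prod measurableSet_Icc

lemma measurableSet_sq : MeasurableSet (Set.Icc (0:ℝ) 1 ×ˢ Set.Icc (0:ℝ) 1) :=
  measurableSet_Icc.prod measurableSet_Icc

lemma cantorT_mem_Q (j : Fin 4) (p : ℝ × ℝ)
    (hp : p ∈ Set.Icc (0:ℝ) 1 ×ˢ Set.Icc (0:ℝ) 1) : cantorT j p ∈ cantorQ j := by
  obtain ⟨⟨h1, h2⟩, h3, h4⟩ := hp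
  fin_cases j <;>
    simp only [cantorT, cantorQ, Set.mem_prod, Set.mem_Icc] <;>
    refine ⟨⟨by linarith, by linarith⟩, by linarith, by linarith⟩

lemma cantorQ_subset_sq (j : Fin 4) : cantorQ j ⊆ Set.Icc (0:ℝ) 1 ×ˢ Set.Icc (0:ℝ) 1 := by
  fin_cases j <;>
    exact Set.prod_mono (Set.Icc_subset_Icc (by norm_num) (by norm_num))
      (Set.Icc_subset_Icc (by norm_num) (by norm_num))

lemma cantorIter_compl (n : ℕ) :
    cantorIter n (Set.Icc (0:ℝ) 1 ×ˢ Set.Icc (0:ℝ) 1)ᶜ = 0 := by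
  induction n with
  | zero =>
      show volume.restrict _ _ = 0
      rw [Measure.restrict_apply measurableSet_sq.compl]
      simp
  | succ n ih =>
      show (∑ j : Fin 4, cantorW j • Measure.map (cantorT j) (cantorIter n)) _ = 0
      rw [Measure.finset_sum_apply]
      refine Finset.sum_eq_zero fun j _ => ?_
      rw [Measure.smul_apply, Measure.map_apply (measurable_cantorT j) measurableSet_sq.compl]
      have hsub : cantorT j ⁻¹' (Set.Icc (0:ℝ) 1 ×ˢ Set.Icc (0:ℝ) 1)ᶜ
          ⊆ (Set.Icc (0:ℝ) 1 ×ˢ Set.Icc (0:ℝ) 1)ᶜ := fun p hp hps =>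
        hp (cantorQ_subset_sq j (cantorT_mem_Q j p hps))
      rw [measure_mono_null hsub ih]
      simp

lemma vol_affine (d : ℝ) (u : Set ℝ) :
    volume ((fun t => 3*t - d) '' u) = 3 * volume u := by
  have h : (fun t : ℝ => 3*t - d) = AffineMap.homothety (d/2) (3:ℝ) := by
    ext t
    simp [AffineMap.homothety_apply, smul_eq_mul]
    ring
  rw [h, Measure.addHaar_image_homothety]
  norm_num

lemma xiProj_preimage_vol (c₁ c₂ : ℝ) (f : ℝ × ℝ → ℝ × ℝ)
    (hf : ∀ p, f p = (p.1/3 + c₁, p.2/3 + c₂)) (S : Set (ℝ × ℝ)) :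
    volume (xiProj (f ⁻¹' S)) = 3 * volume (xiProj S) := by
  have himg : xiProj (f ⁻¹' S)
      = (fun t => 3*t - 3*((c₁+c₂)/Real.sqrt 2)) '' xiProj S := by
    ext t
    simp only [xiProj, Set.mem_image, Set.mem_preimage]
    constructor
    · rintro ⟨p, hp, rfl⟩
      rw [hf] at hp
      exact ⟨((p.1/3 + c₁) + (p.2/3 + c₂))/Real.sqrt 2, ⟨_, hp, rfl⟩, by ring⟩
    · rintro ⟨s, ⟨q, hq, rfl⟩, rfl⟩
      refine ⟨(3*(q.1 - c₁), 3*(q.2 - c₂)), ?_, by ring⟩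
      rw [hf]
      have h : ((3*(q.1 - c₁))/3 + c₁, (3*(q.2 - c₂))/3 + c₂) = q :=
        Prod.ext (by ring) (by ring)
      rw [h]
      exact hq
  rw [himg, vol_affine]

/-- The key projection inequality. -/
lemma key_proj (A : Set (ℝ × ℝ)) :
    volume (xiProj (A ∩ cantorQ 0)) + volume (xiProj (A ∩ cantorQ 2)) +
      (1/2 : ℝ≥0∞) * (volume (xiProj (A ∩ cantorQ 1)) + volume (xiProj (A ∩ cantorQ 3)))
    ≤ volume (xiProj A) := by
  have hs2 : Real.sqrt 2 * Real.sqrt 2 = 2 := Real.mul_self_sqrt (by norm_num)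
  have hs2pos : (0:ℝ) < Real.sqrt 2 := Real.sqrt_pos.mpr (by norm_num)
  set c : ℝ := Real.sqrt 2 / 3 with hc
  have hcnn : (0:ℝ) ≤ c := by rw [hc]; positivity
  set S0 := xiProj (A ∩ cantorQ 0)
  set S1 := xiProj (A ∩ cantorQ 1)
  set S2 := xiProj (A ∩ cantorQ 2)
  set S3 := xiProj (A ∩ cantorQ 3)
  have hsub : ∀ j : Fin 4, xiProj (A ∩ cantorQ j) ⊆ xiProj A :=
    fun j => Set.image_mono Set.inter_subset_left
  -- interval bounds
  have h0 : S0 ⊆ Set.Iic c := by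
    rintro t ⟨p, ⟨_, ⟨hx1, hx2⟩, hy1, hy2⟩, rfl⟩
    simp only [Set.mem_Iic, hc]
    rw [div_le_div_iff₀ hs2pos (by norm_num : (0:ℝ) < 3)]
    nlinarith
  have h2 : S2 ⊆ Set.Ici (2*c) := by
    rintro t ⟨p, ⟨_, ⟨hx1, hx2⟩, hy1, hy2⟩, rfl⟩
    simp only [Set.mem_Ici, hc]
    rw [le_div_iff₀ hs2pos]
    nlinarith
  have h1 : S1 ⊆ Set.Icc c (2*c) := by
    rintro t ⟨p, ⟨_, ⟨hx1, hx2⟩, hy1, hy2⟩, rfl⟩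
    constructor
    · rw [hc, div_le_div_iff₀ (by norm_num : (0:ℝ) < 3) hs2pos]
      nlinarith
    · rw [hc, div_le_iff₀ hs2pos]
      nlinarith
  have h3 : S3 ⊆ Set.Icc c (2*c) := by
    rintro t ⟨p, ⟨_, ⟨hx1, hx2⟩, hy1, hy2⟩, rfl⟩
    constructor
    · rw [hc, div_le_div_iff₀ (by norm_num : (0:ℝ) < 3) hs2pos]
      nlinarith
    · rw [hc, div_le_iff₀ hs2pos]
      nlinarith
  -- volume of S0 concentrates in Iio c
  have e0 : volume S0 = volume (S0 ∩ Set.Iio c) := by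
    have hd := (measure_inter_add_diff (μ := volume) S0 (measurableSet_Iio (a := c))).symm
    have hnull : volume (S0 \ Set.Iio c) = 0 := by
      refine measure_mono_null (fun t ht => ?_) (measure_singleton c)
      exact le_antisymm (h0 ht.1) (not_lt.mp ht.2)
    rw [hd, hnull, add_zero]
  set S13 := S1 ∪ S3 with hS13
  have hub13 : ∀ t ∈ S13, t ≤ 2*c := by
    intro t ht
    rcases ht with h | h
    · exact (h1 h).2
    · exact (h3 h).2
  have hlb13 : ∀ t ∈ S13, c ≤ t := by
    intro t ht
    rcases ht with h | h
    · exact (h1 h).1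
    · exact (h3 h).1
  have e13 : volume S13 = volume (S13 ∩ Set.Iio (2*c)) := by
    have hd := (measure_inter_add_diff (μ := volume) S13 (measurableSet_Iio (a := 2*c))).symm
    have hnull : volume (S13 \ Set.Iio (2*c)) = 0 := by
      refine measure_mono_null (fun t ht => ?_) (measure_singleton (2*c))
      exact le_antisymm (hub13 t ht.1) (not_lt.mp ht.2)
    rw [hd, hnull, add_zero]
  -- splitting at 2c:
  have step2 : volume S13 + volume S2 ≤ volume (S13 ∪ S2) := by
    have hd : volume ((S13 ∪ S2) ∩ Set.Iio (2*c)) + volume ((S13 ∪ S2) \ Set.Iio (2*c))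
        = volume (S13 ∪ S2) :=
      measure_inter_add_diff (S13 ∪ S2) (measurableSet_Iio (a := 2*c))
    calc volume S13 + volume S2
        = volume (S13 ∩ Set.Iio (2*c)) + volume S2 := by rw [← e13]
      _ ≤ volume ((S13 ∪ S2) ∩ Set.Iio (2*c)) + volume ((S13 ∪ S2) \ Set.Iio (2*c)) :=
          add_le_add
            (measure_mono (Set.inter_subset_inter_left _ Set.subset_union_left))
            (measure_mono (fun t ht => ⟨Set.subset_union_right ht, (show ¬ t < 2*c from not_lt.mpr (h2 ht))⟩))
      _ = volume (S13 ∪ S2) := hd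
  -- splitting at c:
  have step1 : volume S0 + volume (S13 ∪ S2) ≤ volume (xiProj A) := by
    have hd : volume (xiProj A ∩ Set.Iio c) + volume (xiProj A \ Set.Iio c)
        = volume (xiProj A) :=
      measure_inter_add_diff (xiProj A) (measurableSet_Iio (a := c))
    have hsub13 : S13 ∪ S2 ⊆ xiProj A \ Set.Iio c := by
      intro t ht
      have htA : t ∈ xiProj A := by
        rcases ht with h | h
        · rcases h with h | h
          · exact hsub 1 h
          · exact hsub 3 h
        · exact hsub 2 h
      have hlb : c ≤ t := by
        rcases ht with h | h
        · exact hlb13 t h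
        · have h2c : 2*c ≤ t := h2 h
          linarith
      exact ⟨htA, not_lt.mpr hlb⟩
    calc volume S0 + volume (S13 ∪ S2)
        = volume (S0 ∩ Set.Iio c) + volume (S13 ∪ S2) := by rw [← e0]
      _ ≤ volume (xiProj A ∩ Set.Iio c) + volume (xiProj A \ Set.Iio c) :=
          add_le_add
            (measure_mono (Set.inter_subset_inter_left _ (hsub 0)))
            (measure_mono hsub13)
      _ = volume (xiProj A) := hd
  -- half-sum bound
  have hhalf : (1/2 : ℝ≥0∞) * (volume S1 + volume S3) ≤ volume S13 := by
    have hle2 : volume S1 + volume S3 ≤ volume S13 + volume S13 :=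
      add_le_add (measure_mono Set.subset_union_left) (measure_mono Set.subset_union_right)
    calc (1/2 : ℝ≥0∞) * (volume S1 + volume S3)
        ≤ (1/2 : ℝ≥0∞) * (volume S13 + volume S13) := mul_le_mul_right hle2 _
      _ = volume S13 := by
          rw [← two_mul, ← mul_assoc, one_div,
            ENNReal.inv_mul_cancel (by norm_num) (by norm_num), one_mul]
  calc volume S0 + volume S2 + (1/2 : ℝ≥0∞) * (volume S1 + volume S3)
      ≤ volume S0 + volume S2 + volume S13 := add_le_add le_rfl hhalf
    _ = volume S0 + (volume S13 + volume S2) := by ring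
    _ ≤ volume S0 + volume (S13 ∪ S2) := add_le_add le_rfl step2
    _ ≤ volume (xiProj A) := step1


/-- Induction step for the Cantor-square measures: the estimate `μ_n(A) ≤ √2·|A_ξ|`
implies the same for `μ_{n+1}`; the key step is the projection inequality
`|A_ξ| ≥ |(A₁)_ξ| + |(A₃)_ξ| + ½(|(A₂)_ξ| + |(A₄)_ξ|)` with `A_j = A ∩ Q_j`. -/
theorem stmt15 (n : ℕ)
    (hn : ∀ A : Set (ℝ × ℝ), MeasurableSet A →
      cantorIter n A ≤ ENNReal.ofReal (Real.sqrt 2) * volume (xiProj A)) :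
    (∀ A : Set (ℝ × ℝ), MeasurableSet A →
      cantorIter (n + 1) A ≤ ENNReal.ofReal (Real.sqrt 2) * volume (xiProj A))
    ∧
    (∀ A : Set (ℝ × ℝ),
      volume (xiProj (A ∩ cantorQ 0)) + volume (xiProj (A ∩ cantorQ 2)) +
        (1/2 : ℝ≥0∞) * (volume (xiProj (A ∩ cantorQ 1)) + volume (xiProj (A ∩ cantorQ 3)))
      ≤ volume (xiProj A)) := by
  refine ⟨?_, key_proj⟩
  intro A hA
  set x : ℝ≥0∞ := ENNReal.ofReal (Real.sqrt 2) with hx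
  have hsum : cantorIter (n+1) A = ∑ j : Fin 4, cantorW j * cantorIter n (cantorT j ⁻¹' A) := by
    show (∑ j : Fin 4, cantorW j • Measure.map (cantorT j) (cantorIter n)) A = _
    rw [Measure.finset_sum_apply]
    refine Finset.sum_congr rfl fun j _ => ?_
    rw [Measure.smul_apply, Measure.map_apply (measurable_cantorT j) hA, smul_eq_mul]
  have hle : ∀ j : Fin 4,
      cantorIter n (cantorT j ⁻¹' A) ≤ cantorIter n (cantorT j ⁻¹' (A ∩ cantorQ j)) := by
    intro j
    have hd := measure_inter_add_diff (μ := cantorIter n) (cantorT j ⁻¹' A) measurableSet_sq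
    have hz : cantorIter n (cantorT j ⁻¹' A \ Set.Icc (0:ℝ) 1 ×ˢ Set.Icc (0:ℝ) 1) = 0 :=
      measure_mono_null (fun p hp => hp.2) (cantorIter_compl n)
    calc cantorIter n (cantorT j ⁻¹' A)
        = cantorIter n (cantorT j ⁻¹' A ∩ Set.Icc (0:ℝ) 1 ×ˢ Set.Icc (0:ℝ) 1) +
            cantorIter n (cantorT j ⁻¹' A \ Set.Icc (0:ℝ) 1 ×ˢ Set.Icc (0:ℝ) 1) := hd.symm
      _ = cantorIter n (cantorT j ⁻¹' A ∩ Set.Icc (0:ℝ) 1 ×ˢ Set.Icc (0:ℝ) 1) := by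
          rw [hz, add_zero]
      _ ≤ cantorIter n (cantorT j ⁻¹' (A ∩ cantorQ j)) :=
          measure_mono fun p hp => ⟨hp.1, cantorT_mem_Q j p hp.2⟩
  have hvol : ∀ j : Fin 4, volume (xiProj (cantorT j ⁻¹' (A ∩ cantorQ j)))
      = 3 * volume (xiProj (A ∩ cantorQ j)) := by
    intro j
    fin_cases j
    · exact xiProj_preimage_vol 0 0 _ (fun p => by simp [cantorT]) _
    · exact xiProj_preimage_vol (2/3) 0 _ (fun p => by simp [cantorT]) _
    · exact xiProj_preimage_vol (2/3) (2/3) _ (fun p => by simp [cantorT]) _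
    · exact xiProj_preimage_vol 0 (2/3) _ (fun p => by simp [cantorT]) _
  have hbound : ∀ j : Fin 4, cantorIter n (cantorT j ⁻¹' A)
      ≤ x * (3 * volume (xiProj (A ∩ cantorQ j))) := by
    intro j
    calc cantorIter n (cantorT j ⁻¹' A)
        ≤ cantorIter n (cantorT j ⁻¹' (A ∩ cantorQ j)) := hle j
      _ ≤ x * volume (xiProj (cantorT j ⁻¹' (A ∩ cantorQ j))) :=
          hn _ ((hA.inter (measurableSet_cantorQ j)).preimage (measurable_cantorT j))
      _ = x * (3 * volume (xiProj (A ∩ cantorQ j))) := by rw [hvol j]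
  set v0 := volume (xiProj (A ∩ cantorQ 0))
  set v1 := volume (xiProj (A ∩ cantorQ 1))
  set v2 := volume (xiProj (A ∩ cantorQ 2))
  set v3 := volume (xiProj (A ∩ cantorQ 3))
  have h13 : (1/3 : ℝ≥0∞) * 3 = 1 := ENNReal.div_mul_cancel (by norm_num) (by norm_num)
  have h16 : (1/6 : ℝ≥0∞) * 3 = 1/2 := by
    rw [one_div, one_div, show (6:ℝ≥0∞) = 2*3 by norm_num,
      ENNReal.mul_inv (by norm_num) (by norm_num), mul_assoc,
      ENNReal.inv_mul_cancel (by norm_num) (by norm_num), mul_one]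
  have ha : ∀ v : ℝ≥0∞, (1/3 : ℝ≥0∞) * (x * (3 * v)) = x * v := by
    intro v
    rw [show (1/3 : ℝ≥0∞) * (x * (3 * v)) = ((1/3 : ℝ≥0∞) * 3) * (x * v) by ring, h13, one_mul]
  have hb : ∀ v : ℝ≥0∞, (1/6 : ℝ≥0∞) * (x * (3 * v)) = x * ((1/2) * v) := by
    intro v
    rw [show (1/6 : ℝ≥0∞) * (x * (3 * v)) = ((1/6 : ℝ≥0∞) * 3) * (x * v) by ring, h16]
    ring
  calc cantorIter (n+1) A = ∑ j : Fin 4, cantorW j * cantorIter n (cantorT j ⁻¹' A) := hsum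
    _ ≤ ∑ j : Fin 4, cantorW j * (x * (3 * volume (xiProj (A ∩ cantorQ j)))) := by
        gcongr with j
        exact hbound j
    _ = (1/3 : ℝ≥0∞) * (x * (3 * v0)) + (1/6 : ℝ≥0∞) * (x * (3 * v1)) +
        (1/3 : ℝ≥0∞) * (x * (3 * v2)) + (1/6 : ℝ≥0∞) * (x * (3 * v3)) := by
        rw [Fin.sum_univ_four]; rfl
    _ = x * (v0 + v2 + (1/2 : ℝ≥0∞) * (v1 + v3)) := by
        simp only [ha, hb]; ring
    _ ≤ x * volume (xiProj A) := mul_le_mul_right (key_proj A) _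
end

section
/- Let u ∈ L¹(ℝ) and let Pu(x+iy) = ∫_ℝ (1/π)·y/((x−t)² + y²)·u(t) dt be its Poisson integral in the upper half-plane. Let μ be a Borel measure on the upper half-plane ℍ satisfying μ(A) ≤ k_x|A_x| + k_y|A_y| for all Borel A ⊂ ℍ. Then for every λ > 0, μ{z ∈ ℍ : |Pu(z)| > λ} ≤ (3k_x + π^{-1}k_y)·‖u‖_{L¹(ℝ)}/λ. -/
open MeasureTheory

open Set
open scoped ENNReal


lemma stmt16_poisson_integrable (x y : ℝ) (hy : 0 < y) :
    Integrable (fun t : ℝ => 1 / Real.pi * (y / ((x - t) ^ 2 + y ^ 2))) := by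
  have hfun : (fun t : ℝ => 1 / Real.pi * (y / ((x - t) ^ 2 + y ^ 2)))
      = fun t : ℝ => (1 / (Real.pi * y)) * (1 + (y⁻¹ * (x - t)) ^ 2)⁻¹ := by
    funext t
    field_simp
    ring
  rw [hfun]
  exact ((integrable_inv_one_add_sq.comp_mul_left' (inv_ne_zero hy.ne')).comp_sub_left x).const_mul _

lemma stmt16_poisson_integral_one (x y : ℝ) (hy : 0 < y) :
    ∫ t : ℝ, 1 / Real.pi * (y / ((x - t) ^ 2 + y ^ 2)) = 1 := by
  have hfun : (fun t : ℝ => 1 / Real.pi * (y / ((x - t) ^ 2 + y ^ 2)))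
      = fun t : ℝ => (1 / (Real.pi * y)) * ((fun s : ℝ => (1 + (y⁻¹ * s) ^ 2)⁻¹) (x - t)) := by
    funext t
    simp only [mul_pow]
    field_simp
    ring
  rw [hfun, integral_const_mul,
    integral_sub_left_eq_self (fun s : ℝ => (1 + (y⁻¹ * s) ^ 2)⁻¹) volume x,
    Measure.integral_comp_inv_mul_left (fun s : ℝ => (1 + s ^ 2)⁻¹) y,
    integral_univ_inv_one_add_sq, smul_eq_mul, abs_of_pos hy]
  field_simp

lemma stmt16_layer (P : ℝ → ℝ) (hP : Measurable P) (g : ℝ → ℝ≥0∞) (hg : Measurable g) :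
    ∫⁻ t, ENNReal.ofReal (P t) * g t = ∫⁻ h in Set.Ioi (0:ℝ), ∫⁻ t in {t | h < P t}, g t := by
  have h1 : ∀ t, ENNReal.ofReal (P t) * g t
      = ∫⁻ h in Set.Ioi (0:ℝ), (if h < P t then g t else 0) := by
    intro t
    have e1 : (fun h : ℝ => if h < P t then g t else 0)
        = Set.indicator (Set.Iio (P t)) (fun _ => g t) := by
      funext h; simp [Set.indicator_apply, Set.mem_Iio]
    rw [e1, lintegral_indicator measurableSet_Iio,
      Measure.restrict_restrict measurableSet_Iio, setLIntegral_const,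
      Set.Iio_inter_Ioi]
    rw [Real.volume_Ioo, mul_comm, sub_zero]
  simp only [h1]
  rw [lintegral_lintegral_swap]
  · refine setLIntegral_congr_fun measurableSet_Ioi (fun h _ => ?_)
    have e2 : (fun t : ℝ => if h < P t then g t else 0)
        = Set.indicator {t | h < P t} g := by
      funext t; simp [Set.indicator_apply]
    rw [e2, lintegral_indicator (measurableSet_lt measurable_const hP)]
  · have e3 : (Function.uncurry fun (t h : ℝ) => if h < P t then g t else 0)
        = Set.indicator {p : ℝ × ℝ | p.2 < P p.1} (fun p => g p.1) := by
      funext p; simp [Function.uncurry, Set.indicator_apply]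
    rw [e3]
    exact ((hg.comp measurable_fst).indicator
      (measurableSet_lt measurable_snd (hP.comp measurable_fst))).aemeasurable

lemma stmt16_bound (v : ℝ → ℝ) (hv : Measurable v) (hvi : Integrable v)
    (x y lam : ℝ) (hy : 0 < y) (hlam : 0 < lam)
    (hM : ∀ r, 0 < r → ∫ t in Metric.closedBall x r, |v t| ≤ 2 * r * lam) :
    |∫ t : ℝ, 1 / Real.pi * (y / ((x - t) ^ 2 + y ^ 2)) * v t| ≤ lam := by
  set P : ℝ → ℝ := fun t => 1 / Real.pi * (y / ((x - t) ^ 2 + y ^ 2)) with hPdef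
  show |∫ t : ℝ, P t * v t| ≤ lam
  have hPmeas : Measurable P := by
    apply Measurable.mul measurable_const
    exact Measurable.div measurable_const
      (((measurable_const.sub measurable_id).pow_const 2).add measurable_const)
  have hden : ∀ t, (0:ℝ) < (x - t) ^ 2 + y ^ 2 := fun t => by positivity
  have hPnonneg : ∀ t, 0 ≤ P t := fun t => by
    have := hden t; rw [hPdef]; positivity
  have hPalt : ∀ t, P t = y / (Real.pi * ((x - t) ^ 2 + y ^ 2)) := fun t => by
    rw [hPdef]; have := hden t; field_simp
  have hPle : ∀ t, P t ≤ (Real.pi * y)⁻¹ := by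
    intro t
    rw [hPalt t, inv_eq_one_div]
    rw [div_le_div_iff₀ (by have := hden t; positivity) (by positivity)]
    have h1 : y ^ 2 ≤ (x - t) ^ 2 + y ^ 2 := by nlinarith [sq_nonneg (x - t)]
    nlinarith [Real.pi_pos]
  have hint : Integrable (fun t => P t * |v t|) := by
    apply Integrable.mono (hvi.abs.const_mul (Real.pi * y)⁻¹)
    · exact (hPmeas.mul hv.abs).aestronglyMeasurable
    · refine ae_of_all _ fun t => ?_
      have h1 : abs (P t * |v t|) = P t * |v t| :=
        abs_of_nonneg (mul_nonneg (hPnonneg t) (abs_nonneg _))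
      have h2 : abs ((Real.pi * y)⁻¹ * |v t|) = (Real.pi * y)⁻¹ * |v t| :=
        abs_of_nonneg (mul_nonneg (by positivity) (abs_nonneg _))
      rw [Real.norm_eq_abs, Real.norm_eq_abs, h1, h2]
      exact mul_le_mul_of_nonneg_right (hPle t) (abs_nonneg _)
  have step1 : |∫ t, P t * v t| ≤ ∫ t, P t * |v t| := by
    have h3 := norm_integral_le_integral_norm (μ := volume) (fun t => P t * v t)
    simp only [Real.norm_eq_abs] at h3
    refine h3.trans (le_of_eq ?_)
    congr 1; funext t; rw [abs_mul, abs_of_nonneg (hPnonneg t)]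
  refine step1.trans ?_
  rw [← ENNReal.ofReal_le_ofReal_iff hlam.le]
  rw [ofReal_integral_eq_lintegral_ofReal hint
    (ae_of_all _ fun t => mul_nonneg (hPnonneg t) (abs_nonneg _))]
  have e1 : ∀ t, ENNReal.ofReal (P t * |v t|)
      = ENNReal.ofReal (P t) * ENNReal.ofReal |v t| := fun t =>
    ENNReal.ofReal_mul (hPnonneg t)
  simp only [e1]
  rw [stmt16_layer P hPmeas _ hv.abs.ennreal_ofReal]
  -- key pointwise (in h) bound
  have key : ∀ h ∈ Set.Ioi (0:ℝ),
      ∫⁻ t in {t | h < P t}, ENNReal.ofReal |v t|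
        ≤ ENNReal.ofReal lam * volume {t | h < P t} := by
    intro h hh
    rw [Set.mem_Ioi] at hh
    have hq : (0:ℝ) < Real.pi * h := by positivity
    have hiff : ∀ t, h < P t ↔ (Real.pi * h) * ((x - t) ^ 2 + y ^ 2) < y := by
      intro t
      rw [hPalt t, lt_div_iff₀ (by have := hden t; positivity)]
      constructor <;> intro H <;> nlinarith [H]
    by_cases hdpos : 0 < y / (Real.pi * h) - y ^ 2
    · set c : ℝ := Real.sqrt (y / (Real.pi * h) - y ^ 2) with hc
      have hcpos : 0 < c := Real.sqrt_pos.mpr hdpos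
      have hc2 : c ^ 2 = y / (Real.pi * h) - y ^ 2 := Real.sq_sqrt hdpos.le
      have hc2q : c ^ 2 * (Real.pi * h) = y - y ^ 2 * (Real.pi * h) := by
        rw [hc2]; field_simp
      have hset : {t | h < P t} = Set.Ioo (x - c) (x + c) := by
        ext t
        rw [Set.mem_setOf_eq, hiff t, Set.mem_Ioo]
        constructor
        · intro H
          have hsq : (x - t) ^ 2 < c ^ 2 := by
            have h2 : (x - t) ^ 2 * (Real.pi * h) < c ^ 2 * (Real.pi * h) := by
              ring_nf at H hc2q ⊢
              linarith
            exact lt_of_mul_lt_mul_right h2 hq.le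
          have habs : |x - t| < c := by
            have h4 := Real.sqrt_lt_sqrt (sq_nonneg (x - t)) hsq
            rwa [Real.sqrt_sq_eq_abs, Real.sqrt_sq hcpos.le] at h4
          rw [abs_lt] at habs
          constructor <;> linarith [habs.1, habs.2]
        · rintro ⟨H1, H2⟩
          have habs1 : -c < x - t := by linarith
          have habs2 : x - t < c := by linarith
          have hsq : (x - t) ^ 2 < c ^ 2 := sq_lt_sq' habs1 habs2
          have h5 := mul_lt_mul_of_pos_right hsq hq
          ring_nf at h5 hc2q ⊢
          linarith
      rw [hset]
      have hsub : Set.Ioo (x - c) (x + c) ⊆ Metric.closedBall x c := by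
        intro t ht
        rw [Metric.mem_closedBall, Real.dist_eq, abs_le]
        exact ⟨by linarith [ht.1], by linarith [ht.2]⟩
      calc ∫⁻ t in Set.Ioo (x - c) (x + c), ENNReal.ofReal |v t|
          ≤ ∫⁻ t in Metric.closedBall x c, ENNReal.ofReal |v t| :=
            lintegral_mono' (Measure.restrict_mono hsub le_rfl) le_rfl
        _ = ENNReal.ofReal (∫ t in Metric.closedBall x c, |v t|) :=
            (ofReal_integral_eq_lintegral_ofReal hvi.abs.integrableOn
              (ae_of_all _ fun t => abs_nonneg _)).symm
        _ ≤ ENNReal.ofReal (2 * c * lam) :=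
            ENNReal.ofReal_le_ofReal (hM c hcpos)
        _ = ENNReal.ofReal lam * volume (Set.Ioo (x - c) (x + c)) := by
            rw [Real.volume_Ioo, show x + c - (x - c) = 2 * c by ring,
              ← ENNReal.ofReal_mul hlam.le, mul_comm lam (2 * c)]
    · push_neg at hdpos
      have h2 : y ≤ y ^ 2 * (Real.pi * h) := by
        have h3 : y / (Real.pi * h) ≤ y ^ 2 := by linarith
        rw [div_le_iff₀ hq] at h3; linarith
      have hset : {t | h < P t} = (∅ : Set ℝ) := by
        ext t
        rw [Set.mem_setOf_eq, hiff t]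
        simp only [Set.mem_empty_iff_false, iff_false, not_lt]
        nlinarith [sq_nonneg (x - t), hq.le]
      rw [hset]
      simp
  calc ∫⁻ h in Set.Ioi (0:ℝ), ∫⁻ t in {t | h < P t}, ENNReal.ofReal |v t|
      ≤ ∫⁻ h in Set.Ioi (0:ℝ), ENNReal.ofReal lam * volume {t | h < P t} := by
        refine lintegral_mono_ae ?_
        filter_upwards [ae_restrict_mem measurableSet_Ioi] with h hh
        exact key h hh
    _ = ENNReal.ofReal lam * ∫⁻ h in Set.Ioi (0:ℝ), volume {t | h < P t} :=
        lintegral_const_mul' _ _ ENNReal.ofReal_ne_top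
    _ = ENNReal.ofReal lam := by
        have htot : ∫⁻ h in Set.Ioi (0:ℝ), volume {t | h < P t} = 1 := by
          have := stmt16_layer P hPmeas (fun _ => (1:ℝ≥0∞)) measurable_const
          simp only [mul_one, setLIntegral_one] at this
          rw [← this,
            ← ofReal_integral_eq_lintegral_ofReal (stmt16_poisson_integrable x y hy)
              (ae_of_all _ fun t => hPnonneg t),
            stmt16_poisson_integral_one x y hy, ENNReal.ofReal_one]
        rw [htot, mul_one]


lemma stmt16_weak (v : ℝ → ℝ) (hvi : Integrable v) (lam : ℝ) (hlam : 0 < lam)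
    (E : Set ℝ)
    (hE : ∀ x ∈ E, ∃ r, 0 < r ∧ 2 * r * lam < ∫ t in Metric.closedBall x r, |v t|) :
    volume E ≤ ENNReal.ofReal (3 * (∫ t : ℝ, |v t|) / lam) := by
  classical
  set N : ℝ := ∫ t : ℝ, |v t| with hN
  have hN0 : 0 ≤ N := integral_nonneg fun t => abs_nonneg _
  -- choice of radii
  have hr' : ∀ x : ℝ, ∃ r : ℝ, x ∈ E →
      (0 < r ∧ 2 * r * lam < ∫ t in Metric.closedBall x r, |v t|) := by
    intro x
    by_cases hx : x ∈ E
    · obtain ⟨r, hr⟩ := hE x hx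
      exact ⟨r, fun _ => hr⟩
    · exact ⟨1, fun hx' => absurd hx' hx⟩
  choose r hr using hr'
  have hrpos : ∀ x ∈ E, 0 < r x := fun x hx => (hr x hx).1
  have hrlt : ∀ x ∈ E, 2 * (r x) * lam < ∫ t in Metric.closedBall x (r x), |v t| :=
    fun x hx => (hr x hx).2
  have hsetle : ∀ (x : ℝ) (ρ : ℝ), ∫ t in Metric.closedBall x ρ, |v t| ≤ N := by
    intro x ρ
    exact setIntegral_le_integral hvi.abs (ae_of_all _ fun t => abs_nonneg _)
  have hrR : ∀ x ∈ E, r x ≤ N / (2 * lam) := by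
    intro x hx
    have h1 := (hrlt x hx).trans_le (hsetle x (r x))
    rw [le_div_iff₀ (by positivity)]
    linarith
  -- conclude via tendsto as τ → 3⁺
  have main : ∀ τ : ℝ, 3 < τ → volume E ≤ ENNReal.ofReal (τ * N / lam) := by
    intro τ hτ
    obtain ⟨B, hBE, hdisj, hcov⟩ :=
      Vitali.exists_disjoint_subfamily_covering_enlargement_closedBall E id r
        (N / (2 * lam)) hrR τ hτ
    have hcount : B.Countable := by
      apply hdisj.countable_of_nonempty_interior
      intro b hb
      have hbpos : 0 < r b := hrpos b (hBE hb)
      rw [id, interior_closedBall b hbpos.ne']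
      exact Metric.nonempty_ball.mpr hbpos
    have hEsub : E ⊆ ⋃ b ∈ B, Metric.closedBall b (τ * r b) := by
      intro a ha
      obtain ⟨b, hb, hsub⟩ := hcov a ha
      refine Set.mem_biUnion hb (hsub ?_)
      show a ∈ Metric.closedBall a (r a)
      exact Metric.mem_closedBall_self (hrpos a ha).le
    have hle1 : volume E ≤ ∑' b : B, volume (Metric.closedBall (b : ℝ) (τ * r b)) :=
      (measure_mono hEsub).trans (measure_biUnion_le volume hcount _)
    have hballvol : ∀ b : B, volume (Metric.closedBall (b : ℝ) (τ * r b))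
        = ENNReal.ofReal (τ / lam) * ENNReal.ofReal (2 * r b * lam) := by
      intro b
      rw [Real.volume_closedBall, ← ENNReal.ofReal_mul (by positivity)]
      congr 1
      field_simp
    have hsum : ∑' b : B, volume (Metric.closedBall (b : ℝ) (τ * r b))
        ≤ ENNReal.ofReal (τ / lam) * ENNReal.ofReal N := by
      calc ∑' b : B, volume (Metric.closedBall (b : ℝ) (τ * r b))
          = ENNReal.ofReal (τ / lam) * ∑' b : B, ENNReal.ofReal (2 * r b * lam) := by
            rw [← ENNReal.tsum_mul_left]
            exact tsum_congr hballvol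
        _ ≤ ENNReal.ofReal (τ / lam) * ENNReal.ofReal N := by
            gcongr
            have hblee : ∑' b : B, ENNReal.ofReal (2 * r b * lam)
                ≤ ∑' b : B, ∫⁻ t in Metric.closedBall (b : ℝ) (r b), ENNReal.ofReal |v t| := by
              refine Summable.tsum_le_tsum (fun b => ?_) ENNReal.summable ENNReal.summable
              have h1 : (2 : ℝ) * r b * lam ≤ ∫ t in Metric.closedBall (b : ℝ) (r b), |v t| :=
                (hrlt b (hBE b.2)).le
              calc ENNReal.ofReal (2 * r b * lam)
                  ≤ ENNReal.ofReal (∫ t in Metric.closedBall (b : ℝ) (r b), |v t|) :=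
                    ENNReal.ofReal_le_ofReal h1
                _ = ∫⁻ t in Metric.closedBall (b : ℝ) (r b), ENNReal.ofReal |v t| :=
                    ofReal_integral_eq_lintegral_ofReal hvi.abs.integrableOn
                      (ae_of_all _ fun t => abs_nonneg _)
            refine hblee.trans ?_
            have hdisj' : (univ : Set B).PairwiseDisjoint
                (fun b : B => Metric.closedBall (b : ℝ) (r b)) := by
              intro b1 _ b2 _ hne
              exact hdisj b1.2 b2.2 (fun h => hne (Subtype.ext h))
            haveI : Countable B := hcount.to_subtype
            calc ∑' b : B, ∫⁻ t in Metric.closedBall (b : ℝ) (r b), ENNReal.ofReal |v t|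
                = ∫⁻ t in ⋃ b : B, Metric.closedBall (b : ℝ) (r b), ENNReal.ofReal |v t| :=
                  (lintegral_iUnion (fun b => measurableSet_closedBall)
                    (fun b1 b2 hne => hdisj' (mem_univ b1) (mem_univ b2) hne) _).symm
              _ ≤ ∫⁻ t, ENNReal.ofReal |v t| :=
                  lintegral_mono' Measure.restrict_le_self le_rfl
              _ = ENNReal.ofReal N :=
                  (ofReal_integral_eq_lintegral_ofReal hvi.abs
                    (ae_of_all _ fun t => abs_nonneg _)).symm
    refine (hle1.trans hsum).trans ?_
    rw [← ENNReal.ofReal_mul (by positivity)]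
    apply ENNReal.ofReal_le_ofReal
    rw [div_mul_eq_mul_div]
  have htend : Filter.Tendsto (fun τ : ℝ => ENNReal.ofReal (τ * N / lam))
      (nhdsWithin 3 (Set.Ioi 3)) (nhds (ENNReal.ofReal (3 * N / lam))) := by
    apply Filter.Tendsto.comp (ENNReal.continuous_ofReal.tendsto _)
    apply Filter.Tendsto.mono_left _ nhdsWithin_le_nhds
    exact (continuous_id.mul continuous_const).div_const lam |>.tendsto 3
  exact ge_of_tendsto htend
    (eventually_nhdsWithin_of_forall fun τ hτ => main τ hτ)

lemma stmt16_ptbound (v : ℝ → ℝ) (hv : Measurable v) (hvi : Integrable v) (x y : ℝ)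
    (hy : 0 < y) :
    |∫ t : ℝ, 1 / Real.pi * (y / ((x - t) ^ 2 + y ^ 2)) * v t|
      ≤ (Real.pi * y)⁻¹ * ∫ t : ℝ, |v t| := by
  set P : ℝ → ℝ := fun t => 1 / Real.pi * (y / ((x - t) ^ 2 + y ^ 2)) with hPdef
  show |∫ t : ℝ, P t * v t| ≤ _
  have hPmeas : Measurable P := by
    apply Measurable.mul measurable_const
    exact Measurable.div measurable_const
      (((measurable_const.sub measurable_id).pow_const 2).add measurable_const)
  have hden : ∀ t, (0:ℝ) < (x - t) ^ 2 + y ^ 2 := fun t => by positivity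
  have hPnonneg : ∀ t, 0 ≤ P t := fun t => by
    have := hden t; rw [hPdef]; positivity
  have hPalt : ∀ t, P t = y / (Real.pi * ((x - t) ^ 2 + y ^ 2)) := fun t => by
    rw [hPdef]; have := hden t; field_simp
  have hPle : ∀ t, P t ≤ (Real.pi * y)⁻¹ := by
    intro t
    rw [hPalt t, inv_eq_one_div]
    rw [div_le_div_iff₀ (by have := hden t; positivity) (by positivity)]
    have h1 : y ^ 2 ≤ (x - t) ^ 2 + y ^ 2 := by nlinarith [sq_nonneg (x - t)]
    nlinarith [Real.pi_pos]
  have hint : Integrable (fun t => P t * |v t|) := by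
    apply Integrable.mono (hvi.abs.const_mul (Real.pi * y)⁻¹)
    · exact (hPmeas.mul hv.abs).aestronglyMeasurable
    · refine ae_of_all _ fun t => ?_
      have h1 : abs (P t * |v t|) = P t * |v t| :=
        abs_of_nonneg (mul_nonneg (hPnonneg t) (abs_nonneg _))
      have h2 : abs ((Real.pi * y)⁻¹ * |v t|) = (Real.pi * y)⁻¹ * |v t| :=
        abs_of_nonneg (mul_nonneg (by positivity) (abs_nonneg _))
      rw [Real.norm_eq_abs, Real.norm_eq_abs, h1, h2]
      exact mul_le_mul_of_nonneg_right (hPle t) (abs_nonneg _)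
  have step1 : |∫ t : ℝ, P t * v t| ≤ ∫ t : ℝ, P t * |v t| := by
    have h3 := norm_integral_le_integral_norm (μ := volume) (fun t => P t * v t)
    simp only [Real.norm_eq_abs] at h3
    refine h3.trans (le_of_eq ?_)
    congr 1; funext t; rw [abs_mul, abs_of_nonneg (hPnonneg t)]
  refine step1.trans ?_
  rw [← integral_const_mul]
  refine integral_mono hint (hvi.abs.const_mul _) fun t => ?_
  exact mul_le_mul_of_nonneg_right (hPle t) (abs_nonneg _)

/-- Weak-type (1,1) estimate for the Poisson integral with respect to a well-projected
measure `μ` on the upper half-plane: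
`μ{z : |Pu(z)| > λ} ≤ (3k_x + π⁻¹k_y)·‖u‖₁/λ`. -/
theorem stmt16 (u : ℝ → ℝ) (hu : Integrable u)
    (μ : Measure ℂ) (kx ky : ℝ) (hkx : 0 ≤ kx) (hky : 0 ≤ ky)
    (hwp : ∀ A : Set ℂ, MeasurableSet A → A ⊆ {z : ℂ | 0 < z.im} →
      μ A ≤ ENNReal.ofReal kx * volume (Complex.re '' A) +
            ENNReal.ofReal ky * volume (Complex.im '' A))
    (lam : ℝ) (hlam : 0 < lam) :
    μ {z : ℂ | 0 < z.im ∧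
        lam < |∫ t : ℝ, (1 / Real.pi) * (z.im / ((z.re - t) ^ 2 + z.im ^ 2)) * u t|} ≤
      ENNReal.ofReal ((3 * kx + ky / Real.pi) * (∫ t : ℝ, |u t|) / lam) := by
  classical
  have hum := hu.1
  set v : ℝ → ℝ := hum.mk u with hvdef
  have hvm : Measurable v := hum.stronglyMeasurable_mk.measurable
  have huv : u =ᵐ[volume] v := hum.ae_eq_mk
  have hvi : Integrable v := hu.congr huv
  have hint_eq : ∀ z : ℂ,
      (∫ t : ℝ, (1 / Real.pi) * (z.im / ((z.re - t) ^ 2 + z.im ^ 2)) * u t)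
        = ∫ t : ℝ, (1 / Real.pi) * (z.im / ((z.re - t) ^ 2 + z.im ^ 2)) * v t := by
    intro z
    refine integral_congr_ae ?_
    filter_upwards [huv] with t ht
    rw [ht]
  have habs_eq : (∫ t : ℝ, |u t|) = ∫ t : ℝ, |v t| := by
    refine integral_congr_ae ?_
    filter_upwards [huv] with t ht
    rw [ht]
  rw [habs_eq]
  set N : ℝ := ∫ t : ℝ, |v t| with hN
  have hN0 : 0 ≤ N := integral_nonneg fun t => abs_nonneg _
  set g : ℂ → ℝ :=
    fun z => ∫ t : ℝ, (1 / Real.pi) * (z.im / ((z.re - t) ^ 2 + z.im ^ 2)) * v t with hg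
  have hgm : Measurable g := by
    have hf : Measurable fun p : ℂ × ℝ =>
        (1 / Real.pi) * (p.1.im / ((p.1.re - p.2) ^ 2 + p.1.im ^ 2)) * v p.2 := by
      apply Measurable.mul
      · apply Measurable.mul measurable_const
        apply Measurable.div (Complex.measurable_im.comp measurable_fst)
        exact (((Complex.measurable_re.comp measurable_fst).sub measurable_snd).pow_const 2).add
          ((Complex.measurable_im.comp measurable_fst).pow_const 2)
      · exact hvm.comp measurable_snd
    exact hf.stronglyMeasurable.integral_prod_right'.measurable
  set A : Set ℂ := {z : ℂ | 0 < z.im ∧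
      lam < |∫ t : ℝ, (1 / Real.pi) * (z.im / ((z.re - t) ^ 2 + z.im ^ 2)) * u t|} with hA
  have hAeq : A = {z : ℂ | 0 < z.im} ∩ {z : ℂ | lam < |g z|} := by
    ext z
    simp only [hA, Set.mem_setOf_eq, Set.mem_inter_iff, hint_eq z, hg]
  have hAmeas : MeasurableSet A := by
    rw [hAeq]
    exact (measurableSet_lt measurable_const Complex.measurable_im).inter
      (measurableSet_lt measurable_const hgm.abs)
  have hAsub : A ⊆ {z : ℂ | 0 < z.im} := fun z hz => hz.1
  have hmem : ∀ z ∈ A, 0 < z.im ∧ lam < |g z| := by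
    intro z hz
    rw [hAeq] at hz
    exact ⟨hz.1, hz.2⟩
  -- y-projection bound
  have him : volume (Complex.im '' A) ≤ ENNReal.ofReal (N / (Real.pi * lam)) := by
    have hsub : Complex.im '' A ⊆ Set.Ioo 0 (N / (Real.pi * lam)) := by
      rintro _ ⟨z, hz, rfl⟩
      obtain ⟨hy, hlt⟩ := hmem z hz
      refine ⟨hy, ?_⟩
      have hpt := stmt16_ptbound v hvm hvi z.re z.im hy
      have hlt2 : lam < (Real.pi * z.im)⁻¹ * N := lt_of_lt_of_le hlt hpt
      rw [inv_mul_eq_div] at hlt2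
      have h3 := (lt_div_iff₀ (by positivity)).mp hlt2
      rw [lt_div_iff₀ (by positivity)]
      nlinarith [h3]
    exact (measure_mono hsub).trans (by rw [Real.volume_Ioo, sub_zero])
  -- x-projection bound
  have hre : volume (Complex.re '' A) ≤ ENNReal.ofReal (3 * N / lam) := by
    have := stmt16_weak v hvi lam hlam (Complex.re '' A) ?_
    · exact this
    rintro _ ⟨z, hz, rfl⟩
    obtain ⟨hy, hlt⟩ := hmem z hz
    by_contra hcon
    push_neg at hcon
    have hb := stmt16_bound v hvm hvi z.re z.im lam hy hlam fun r hr => hcon r hr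
    exact absurd hlt (not_lt.mpr hb)
  calc μ A ≤ ENNReal.ofReal kx * volume (Complex.re '' A)
        + ENNReal.ofReal ky * volume (Complex.im '' A) := hwp A hAmeas hAsub
    _ ≤ ENNReal.ofReal kx * ENNReal.ofReal (3 * N / lam)
        + ENNReal.ofReal ky * ENNReal.ofReal (N / (Real.pi * lam)) := by gcongr
    _ = ENNReal.ofReal ((3 * kx + ky / Real.pi) * N / lam) := by
      rw [← ENNReal.ofReal_mul hkx, ← ENNReal.ofReal_mul hky,
        ← ENNReal.ofReal_add (mul_nonneg hkx (by positivity)) (mul_nonneg hky (by positivity))]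
      congr 1
      have hpi := Real.pi_ne_zero
      field_simp
end
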